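/- arXiv:2011.02896 — 13 statements merged into one kernel-verified Lean document; each statement's English description precedes it below -/
import Mathlib

section
/- Let θ ∈ (0,π) and set ξ(v) = v²·sin θ − 2v·cos θ − sin θ. Suppose I ⊆ (0,∞) is an interval and H : I → ℝ is differentiable with H(t)·sin θ − t·cos θ ≠ 0 and H'(t) = (t·sin θ + H(t)·cos θ)/(H(t)·sin θ − t·cos θ) for every t ∈ I. Then the function t ↦ t²·ξ(H(t)/t) is constant on I. -/
/-- The first integral of the dHYM ODE: if `H' = (t sin θ + H cos θ)/(H sin θ - t cos θ)`
on an interval `I ⊆ (0,∞)`, then `t ↦ t² ξ(H t / t)` is constant on `I`, where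
`ξ(v) = v² sin θ - 2 v cos θ - sin θ`. -/
theorem dHYM_ode_first_integral (θ : ℝ) (hθ : θ ∈ Set.Ioo 0 Real.pi)
    (ξ : ℝ → ℝ)
    (hξ : ξ = fun v => v ^ 2 * Real.sin θ - 2 * v * Real.cos θ - Real.sin θ)
    (I : Set ℝ) (hI : I ⊆ Set.Ioi (0 : ℝ)) (hconn : I.OrdConnected)
    (H : ℝ → ℝ)
    (hne : ∀ t ∈ I, H t * Real.sin θ - t * Real.cos θ ≠ 0)
    (hODE : ∀ t ∈ I, HasDerivAt H
      ((t * Real.sin θ + H t * Real.cos θ) / (H t * Real.sin θ - t * Real.cos θ)) t) :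
    ∀ s ∈ I, ∀ t ∈ I, s ^ 2 * ξ (H s / s) = t ^ 2 * ξ (H t / t) := by
  set F : ℝ → ℝ := fun t => H t ^ 2 * Real.sin θ - 2 * t * H t * Real.cos θ
    - t ^ 2 * Real.sin θ with hF
  have hderiv : ∀ t ∈ I, HasDerivAt F 0 t := by
    intro t ht
    have h := hODE t ht
    have hne' := hne t ht
    have : HasDerivAt F
        (2 * H t * ((t * Real.sin θ + H t * Real.cos θ) / (H t * Real.sin θ - t * Real.cos θ)) * Real.sin θ
          - (2 * H t + 2 * t * ((t * Real.sin θ + H t * Real.cos θ) / (H t * Real.sin θ - t * Real.cos θ))) * Real.cos θ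
          - 2 * t * Real.sin θ) t := by
      have h1 : HasDerivAt (fun t => H t ^ 2 * Real.sin θ)
          (2 * H t * ((t * Real.sin θ + H t * Real.cos θ) / (H t * Real.sin θ - t * Real.cos θ)) * Real.sin θ) t := by
        have := (h.pow 2).mul_const (Real.sin θ)
        simpa [mul_comm, mul_assoc, mul_left_comm] using this
      have h2 : HasDerivAt (fun t => 2 * t * H t * Real.cos θ)
          ((2 * H t + 2 * t * ((t * Real.sin θ + H t * Real.cos θ) / (H t * Real.sin θ - t * Real.cos θ))) * Real.cos θ) t := by
        have hid : HasDerivAt (fun t : ℝ => 2 * t) 2 t := by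
          simpa using (hasDerivAt_id t).const_mul (2:ℝ)
        have := (hid.mul h).mul_const (Real.cos θ)
        simpa [mul_comm, mul_assoc, mul_left_comm, add_comm] using this
      have h3 : HasDerivAt (fun t : ℝ => t ^ 2 * Real.sin θ) (2 * t * Real.sin θ) t := by
        have := ((hasDerivAt_id t).pow 2).mul_const (Real.sin θ)
        simpa [mul_comm] using this
      exact (h1.sub h2).sub h3
    convert this using 1
    field_simp
    ring
  have hconv : Convex ℝ I := convex_iff_ordConnected.mpr hconn
  have hconst : ∀ s ∈ I, ∀ t ∈ I, F s = F t := by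
    intro s hs t ht
    have := hconv.norm_image_sub_le_of_norm_hasFDerivWithin_le
      (f := F) (f' := fun _ => ContinuousLinearMap.smulRight (1 : ℝ →L[ℝ] ℝ) (0:ℝ)) (C := 0)
      (fun x hx => by
        simpa using ((hderiv x hx).hasFDerivAt).hasFDerivWithinAt (s := I))
      (fun x _ => by simp) ht hs
    simpa [sub_eq_zero] using this
  intro s hs t ht
  have hs0 : (0:ℝ) < s := hI hs
  have ht0 : (0:ℝ) < t := hI ht
  have key : ∀ u : ℝ, 0 < u → u ^ 2 * ξ (H u / u) = F u := by
    intro u hu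
    subst hξ
    simp only [hF]
    field_simp
  rw [key s hs0, key t ht0, hconst s hs t ht]
end

section
/- Let θ ∈ (0,π) and C' ∈ ℝ, and let I ⊆ (0,∞) be an interval on which t² + C' > 0 for all t ∈ I. Then each of the two functions H₊(t) = t·cot θ + √((cot²θ + 1)(t² + C')) and H₋(t) = t·cot θ − √((cot²θ + 1)(t² + C')) is differentiable on I, satisfies H(t)·sin θ − t·cos θ ≠ 0 on I, and solves the ODE H'(t) = (t·sin θ + H(t)·cos θ)/(H(t)·sin θ − t·cos θ) on I. -/
/-!
In the coordinates rotated by `θ`, the branches are the hyperbolas `u² = t² + C'` with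
`u = H sin θ - t cos θ`: indeed `H₊`, `H₋` are `(t cos θ ± √(t² + C')) / sin θ`, so `u = ±√(t² + C')`.
Differentiating `u² = t² + C'` gives `u u' = t`, i.e. `(H' sin θ - cos θ) u = t`, and since
`sin² θ + cos² θ = 1` the solution `H' = (t + u cos θ) / (u sin θ)` is exactly
`(t sin θ + H cos θ) / u`.
-/

open Real

theorem cot_sq_add_one_eq_inv_sin_sq {θ : ℝ} (hθ : sin θ ≠ 0) : cot θ ^ 2 + 1 = (sin θ ^ 2)⁻¹ := by
  rw [cot_eq_cos_div_sin]
  field_simp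
  linear_combination cos_sq_add_sin_sq θ

theorem sqrt_cot_sq_add_one_mul {θ : ℝ} (hθ : 0 < sin θ) (x : ℝ) :
    √((cot θ ^ 2 + 1) * x) = √x / sin θ := by
  rw [cot_sq_add_one_eq_inv_sin_sq hθ.ne', sqrt_mul (by positivity), sqrt_inv, sqrt_sq hθ.le]
  ring

namespace DHYM

/-- `H₊` (`ε = 1`) and `H₋` (`ε = -1`) written with `s = sin θ` and `c = cos θ`. -/
noncomputable def branch (s c ε C' t : ℝ) : ℝ := (t * c + ε * √(t ^ 2 + C')) / s

variable {s c ε C' t : ℝ}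

theorem branch_mul_sub (hs : s ≠ 0) : branch s c ε C' t * s - t * c = ε * √(t ^ 2 + C') := by
  unfold branch
  field_simp
  ring

theorem mul_add_branch_mul (hs : s ≠ 0) (hsc : s ^ 2 + c ^ 2 = 1) :
    t * s + branch s c ε C' t * c = (t + ε * c * √(t ^ 2 + C')) / s := by
  unfold branch
  field_simp
  linear_combination t * hsc

theorem hasDerivAt_sqrt_sq_add (hR : 0 < t ^ 2 + C') :
    HasDerivAt (fun x => √(x ^ 2 + C')) (t / √(t ^ 2 + C')) t := by
  convert ((hasDerivAt_pow 2 t).add_const C').sqrt hR.ne' using 1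
  ring

theorem hasDerivAt_branch (hR : 0 < t ^ 2 + C') :
    HasDerivAt (branch s c ε C') ((c + ε * (t / √(t ^ 2 + C'))) / s) t := by
  have hlin : HasDerivAt (fun x : ℝ => x * c) c t := by
    simpa using (hasDerivAt_id t).mul_const c
  exact (hlin.add ((hasDerivAt_sqrt_sq_add hR).const_mul ε)).div_const s

theorem hasDerivAt_branch_ode (hs : s ≠ 0) (hsc : s ^ 2 + c ^ 2 = 1) (hε : ε ^ 2 = 1)
    (hR : 0 < t ^ 2 + C') :
    HasDerivAt (branch s c ε C')
      ((t * s + branch s c ε C' t * c) / (branch s c ε C' t * s - t * c)) t := by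
  have hq : √(t ^ 2 + C') ≠ 0 := (sqrt_pos.mpr hR).ne'
  have hε0 : ε ≠ 0 := by rintro rfl; norm_num at hε
  convert hasDerivAt_branch hR using 1
  rw [branch_mul_sub hs, mul_add_branch_mul hs hsc]
  field_simp
  linear_combination -t * hε

theorem branch_sin_cos {θ : ℝ} (hθ : 0 < sin θ) (ε C' : ℝ) :
    (fun t => t * cot θ + ε * √((cot θ ^ 2 + 1) * (t ^ 2 + C'))) = branch (sin θ) (cos θ) ε C' := by
  funext t
  rw [sqrt_cot_sq_add_one_mul hθ, cot_eq_cos_div_sin, branch]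
  ring

end DHYM

open DHYM

theorem dHYM_ode_explicit_solutions_general (θ C' : ℝ) (hθ : θ ∈ Set.Ioo 0 Real.pi)
    (I : Set ℝ)
    (hpos : ∀ t ∈ I, 0 < t ^ 2 + C')
    (ε : ℝ) (hε : ε = 1 ∨ ε = -1)
    (H : ℝ → ℝ)
    (hH : H = fun t => t * Real.cot θ
      + ε * Real.sqrt ((Real.cot θ ^ 2 + 1) * (t ^ 2 + C'))) :
    ∀ t ∈ I, (H t * Real.sin θ - t * Real.cos θ ≠ 0) ∧
      HasDerivAt H
        ((t * Real.sin θ + H t * Real.cos θ) / (H t * Real.sin θ - t * Real.cos θ)) t := by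
  intro t ht
  have hs : 0 < sin θ := sin_pos_of_pos_of_lt_pi hθ.1 hθ.2
  have hsc : sin θ ^ 2 + cos θ ^ 2 = 1 := sin_sq_add_cos_sq θ
  have hε2 : ε ^ 2 = 1 := by rcases hε with rfl | rfl <;> norm_num
  have hε0 : ε ≠ 0 := by rcases hε with rfl | rfl <;> norm_num
  subst hH
  rw [branch_sin_cos hs]
  refine ⟨?_, hasDerivAt_branch_ode hs.ne' hsc hε2 (hpos t ht)⟩
  rw [branch_mul_sub hs.ne']
  exact mul_ne_zero hε0 (sqrt_pos.mpr (hpos t ht)).ne'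

/-- The two explicit branches `H₊`, `H₋` (corresponding to `ε = 1` and `ε = -1`)
solve the dHYM ODE `H' = (t sin θ + H cos θ)/(H sin θ - t cos θ)` on any interval
`I ⊆ (0,∞)` on which `t² + C' > 0`. -/
theorem dHYM_ode_explicit_solutions (θ C' : ℝ) (hθ : θ ∈ Set.Ioo 0 Real.pi)
    (I : Set ℝ) (hI : I ⊆ Set.Ioi (0 : ℝ)) (hconn : I.OrdConnected)
    (hpos : ∀ t ∈ I, 0 < t ^ 2 + C')
    (ε : ℝ) (hε : ε = 1 ∨ ε = -1)
    (H : ℝ → ℝ)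
    (hH : H = fun t => t * Real.cot θ
      + ε * Real.sqrt ((Real.cot θ ^ 2 + 1) * (t ^ 2 + C'))) :
    ∀ t ∈ I, (H t * Real.sin θ - t * Real.cos θ ≠ 0) ∧
      HasDerivAt H
        ((t * Real.sin θ + H t * Real.cos θ) / (H t * Real.sin θ - t * Real.cos θ)) t :=
  dHYM_ode_explicit_solutions_general θ C' hθ I hpos ε hε H hH
end

section
/- With the notation of the setup: (cot²θ̂ + 1)(t₋² + C') = (P − xQ)²/(4k₁²x²) and (cot²θ̂ + 1)(t₊² + C') = (P + xQ)²/(4k₁²x²). Consequently, if the stability condition P > xQ holds then t² + C' > 0 for every t ∈ (t₋, t₊], while if P = xQ then t₋² + C' = 0. -/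
/-!
With `N² = PQ` and `4k₁k₂ = P − Q`, the factor `cot²θ̂ + 1 = 1 / sin²θ̂` equals `PQ / (4k₁²)`, and
`C' = (P − Q)(P − x²Q) / (x²PQ)`. For `t = (1 + e)/x` with `e = ±x` the product then reduces to
`PQ(1 + e)² + (P − Q)(P − x²Q) = (P + eQ)²`, a polynomial identity once `e² = x²`.
The sign claims follow because `t ↦ t²` is increasing on `[t₋, t₊] ⊆ [0, ∞)`.
-/

theorem Real.cot_sq_add_one {θ : ℝ} (hθ : Real.sin θ ≠ 0) :
    Real.cot θ ^ 2 + 1 = 1 / Real.sin θ ^ 2 := by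
  rw [Real.cot_eq_cos_div_sin, div_pow, div_add_one (pow_ne_zero 2 hθ), Real.cos_sq_add_sin_sq]

-- `√` of the left side is the modulus of `(1 + i(a + b))(1 + i(a − b))`.
theorem one_sub_sq_add_sq_sq_add_four_mul_sq {R : Type*} [CommRing R] (a b : R) :
    (1 - a ^ 2 + b ^ 2) ^ 2 + 4 * a ^ 2 = (1 + (a + b) ^ 2) * (1 + (a - b) ^ 2) := by
  ring

theorem mul_endpoint_sq_add {K : Type*} [Field K] {x e P Q : K} (hx : x ≠ 0)
    (hP : P ≠ 0) (hQ : Q ≠ 0) (he : e ^ 2 = x ^ 2) :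
    P * Q * (((1 + e) / x) ^ 2 + (P - Q) * (P - x ^ 2 * Q) / (x ^ 2 * (P * Q))) =
      (P + e * Q) ^ 2 / x ^ 2 := by
  field_simp
  linear_combination (P * Q - Q ^ 2) * he

theorem dHYM_endpoint_identities_general
    (x k1 k2 θ N P Q C tm tp : ℝ)
    (hx : x ∈ Set.Ioo (0 : ℝ) 1) (hk1 : k1 < 0)
    (hN : N = Real.sqrt ((1 - k1 ^ 2 + k2 ^ 2) ^ 2 + 4 * k1 ^ 2))
    (hsin : Real.sin θ = -(2 * k1) / N)
    (hP : P = 1 + (k1 + k2) ^ 2) (hQ : Q = 1 + (k1 - k2) ^ 2)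
    (hC : C = 4 * k1 * k2 * (P - x ^ 2 * Q) / (x ^ 2 * N ^ 2))
    (htm : tm = (1 - x) / x) (htp : tp = (1 + x) / x) :
    (Real.cot θ ^ 2 + 1) * (tm ^ 2 + C) = (P - x * Q) ^ 2 / (4 * k1 ^ 2 * x ^ 2) ∧
    (Real.cot θ ^ 2 + 1) * (tp ^ 2 + C) = (P + x * Q) ^ 2 / (4 * k1 ^ 2 * x ^ 2) ∧
    (P > x * Q → ∀ t ∈ Set.Ioc tm tp, 0 < t ^ 2 + C) ∧
    (P = x * Q → tm ^ 2 + C = 0) := by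
  obtain ⟨hx0, hx1⟩ := hx
  have hk1' : k1 ≠ 0 := hk1.ne
  have hP0 : 0 < P := by rw [hP]; positivity
  have hQ0 : 0 < Q := by rw [hQ]; positivity
  have hNPQ : N ^ 2 = P * Q := by
    rw [hN, Real.sq_sqrt (by positivity), hP, hQ, one_sub_sq_add_sq_sq_add_four_mul_sq]
  have hsin0 : Real.sin θ ≠ 0 := by
    rw [hsin]; exact div_ne_zero (by linarith) (by rintro rfl; nlinarith [mul_pos hP0 hQ0])
  have hcot : Real.cot θ ^ 2 + 1 = P * Q / (4 * k1 ^ 2) := by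
    rw [Real.cot_sq_add_one hsin0, hsin, ← hNPQ]
    field_simp
    ring
  have hC' : C = (P - Q) * (P - x ^ 2 * Q) / (x ^ 2 * (P * Q)) := by
    rw [hC, hNPQ, hP, hQ]; ring
  have hendpoint (e : ℝ) (he : e ^ 2 = x ^ 2) :
      (Real.cot θ ^ 2 + 1) * (((1 + e) / x) ^ 2 + C) = (P + e * Q) ^ 2 / (4 * k1 ^ 2 * x ^ 2) := by
    rw [hcot, hC', div_mul_eq_mul_div, mul_endpoint_sq_add hx0.ne' hP0.ne' hQ0.ne' he]
    ring
  have hm : (Real.cot θ ^ 2 + 1) * (tm ^ 2 + C) = (P - x * Q) ^ 2 / (4 * k1 ^ 2 * x ^ 2) := by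
    simpa [htm, sub_eq_add_neg] using hendpoint (-x) (neg_sq x)
  have hcot0 : 0 < Real.cot θ ^ 2 + 1 := by positivity
  refine ⟨hm, htp ▸ hendpoint x rfl, fun hstable t ht => ?_, fun hcrit => ?_⟩
  · have htm0 : 0 ≤ tm := by rw [htm]; exact div_nonneg (by linarith) hx0.le
    have hm0 : 0 < tm ^ 2 + C := by
      refine pos_of_mul_pos_right (hm ▸ ?_) hcot0.le
      exact div_pos (pow_pos (sub_pos.mpr hstable) 2) (by positivity)
    linarith [pow_le_pow_left₀ htm0 ht.1.le 2]
  · rw [hcrit, sub_self, zero_pow two_ne_zero, zero_div] at hm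
    exact (mul_eq_zero.mp hm).resolve_left hcot0.ne'

/-- Endpoint values of `(cot²θ̂ + 1)(t² + C')` at `t₋` and `t₊`, and the consequences
of the stability condition `P > xQ` (resp. of the equality `P = xQ`). -/
theorem dHYM_endpoint_identities
    (x k1 k2 θ N P Q C tm tp : ℝ)
    (hx : x ∈ Set.Ioo (0 : ℝ) 1) (hk1 : k1 < 0) (hk2 : k2 ≠ 0)
    (hθ : θ ∈ Set.Ioo 0 Real.pi)
    (hN : N = Real.sqrt ((1 - k1 ^ 2 + k2 ^ 2) ^ 2 + 4 * k1 ^ 2))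
    (hcos : Real.cos θ = (1 - k1 ^ 2 + k2 ^ 2) / N)
    (hsin : Real.sin θ = -(2 * k1) / N)
    (hP : P = 1 + (k1 + k2) ^ 2) (hQ : Q = 1 + (k1 - k2) ^ 2)
    (hC : C = 4 * k1 * k2 * (P - x ^ 2 * Q) / (x ^ 2 * N ^ 2))
    (htm : tm = (1 - x) / x) (htp : tp = (1 + x) / x) :
    (Real.cot θ ^ 2 + 1) * (tm ^ 2 + C) = (P - x * Q) ^ 2 / (4 * k1 ^ 2 * x ^ 2) ∧
    (Real.cot θ ^ 2 + 1) * (tp ^ 2 + C) = (P + x * Q) ^ 2 / (4 * k1 ^ 2 * x ^ 2) ∧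
    (P > x * Q → ∀ t ∈ Set.Ioc tm tp, 0 < t ^ 2 + C) ∧
    (P = x * Q → tm ^ 2 + C = 0) :=
  dHYM_endpoint_identities_general x k1 k2 θ N P Q C tm tp hx hk1 hN hsin hP hQ hC htm htp
end

section
/- With the notation of the setup, the solution branch H₋ satisfies the boundary identity H₋(t₊) = k₁·(1+x)/x + k₂·(1−x)/x. -/
/-- Boundary identity at the zero section: the branch `H₋` satisfies
`H₋(t₊) = k₁(1+x)/x + k₂(1−x)/x`. -/
theorem dHYM_boundary_at_zero_section
    (x k1 k2 θ N P Q C tm tp : ℝ)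
    (hx : x ∈ Set.Ioo (0 : ℝ) 1) (hk1 : k1 < 0) (hk2 : k2 ≠ 0)
    (hθ : θ ∈ Set.Ioo 0 Real.pi)
    (hN : N = Real.sqrt ((1 - k1 ^ 2 + k2 ^ 2) ^ 2 + 4 * k1 ^ 2))
    (hcos : Real.cos θ = (1 - k1 ^ 2 + k2 ^ 2) / N)
    (hsin : Real.sin θ = -(2 * k1) / N)
    (hP : P = 1 + (k1 + k2) ^ 2) (hQ : Q = 1 + (k1 - k2) ^ 2)
    (hC : C = 4 * k1 * k2 * (P - x ^ 2 * Q) / (x ^ 2 * N ^ 2))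
    (htm : tm = (1 - x) / x) (htp : tp = (1 + x) / x)
    (Hm : ℝ → ℝ)
    (hHm : Hm = fun t => t * Real.cot θ
      - Real.sqrt ((Real.cot θ ^ 2 + 1) * (t ^ 2 + C))) :
    Hm tp = k1 * (1 + x) / x + k2 * (1 - x) / x := by
  obtain ⟨hx0, hx1⟩ := hx
  have hk1' : k1 ≠ 0 := ne_of_lt hk1
  have hxne : x ≠ 0 := ne_of_gt hx0
  have hNpos : 0 < N := by
    rw [hN]; apply Real.sqrt_pos.mpr; positivity
  have hNsq : N ^ 2 = (1 - k1 ^ 2 + k2 ^ 2) ^ 2 + 4 * k1 ^ 2 := by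
    rw [hN, Real.sq_sqrt]; positivity
  have hsinpos : 0 < Real.sin θ := Real.sin_pos_of_pos_of_lt_pi hθ.1 hθ.2
  have hcot : Real.cot θ = (1 - k1 ^ 2 + k2 ^ 2) / (-(2 * k1)) := by
    rw [Real.cot_eq_cos_div_sin, hcos, hsin]
    field_simp
  have hNPQ : N ^ 2 = P * Q := by
    rw [hNsq, hP, hQ]; ring
  have hPpos : 0 < P := by rw [hP]; positivity
  have hQpos : 0 < Q := by rw [hQ]; positivity
  have hkey : (Real.cot θ ^ 2 + 1) * (tp ^ 2 + C) = ((P + x * Q) / (-(2 * k1) * x)) ^ 2 := by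
    rw [hcot, htp, hC, hNPQ]
    have h2k1 : -(2 * k1) ≠ 0 := by nlinarith
    field_simp
    rw [hP, hQ]; ring
  have hb : 0 ≤ (P + x * Q) / (-(2 * k1) * x) := by
    apply div_nonneg
    · nlinarith
    · nlinarith
  rw [hHm]
  simp only
  rw [hkey, Real.sqrt_sq hb, hcot, htp, hP, hQ]
  field_simp
  ring
end

section
/- Assume the stability condition P > xQ and fix s_Σ ∈ ℝ. Set ŝ = 2x·s_Σ + 2, r̂ = N and α = N(−2 + s_Σ·x)/(2(1 + (k₁ − k₂)²)·k₂²). Then there exist unique reals d₀, d₁ such that the function ψ defined with these constants satisfies ψ(t₋) = ψ(t₊) = 0; moreover, these unique d₀, d₁ automatically also satisfy ψ'(t₋) = 2t₋ and ψ'(t₊) = −2t₊. -/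
/-!
The profile depends affinely on `(d₀, d₁)`, so prescribing its values at the two distinct
points `t₋ ≠ t₊` determines `d₀, d₁` uniquely, `d₁` being minus the slope of the secant.

At the endpoints the radicand `(cot²θ̂ + 1)(t² + C')` is a perfect square: it differs from
`((P + Q (x t - 1)) / (-2 k₁ x))²` by a multiple of `(x t - 1)² - x²`, which vanishes exactly at
`t = t±`. By the stability condition the base `(P ∓ x Q) / (-2 k₁ x)` is nonnegative, so the
`3/2`-power is its cube. Since `N` only enters through `N² = P Q`, the values and slopes of `ψ` at
`t±` are rational in `x, k₁, k₂, s_Σ`, and the two derivative conditions become rational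
identities which hold for this choice of `α`.
-/

namespace MomentumProfile

open Real

/-- `ψ(t) = profile … t + d₀ + d₁ t`. -/
noncomputable def profile (a b c κ C t : ℝ) : ℝ :=
  a * t ^ 2 + b * t ^ 3 - c * (κ * (t ^ 2 + C)) ^ ((3 : ℝ) / 2)

section Interpolation

variable {K : Type*} [Field K]

theorem eq_div_of_add_affine_eq_zero {f : K → K} {a b d₀ d₁ : K} (hab : a ≠ b)
    (ha : f a + d₀ + d₁ * a = 0) (hb : f b + d₀ + d₁ * b = 0) :
    d₁ = (f a - f b) / (b - a) := by
  rw [eq_div_iff (sub_ne_zero.2 hab.symm)]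
  linear_combination hb - ha

theorem existsUnique_add_affine_eq_zero (f : K → K) {a b : K} (hab : a ≠ b) :
    ∃! p : K × K, f a + p.1 + p.2 * a = 0 ∧ f b + p.1 + p.2 * b = 0 := by
  have hba : b - a ≠ 0 := sub_ne_zero.2 hab.symm
  refine ⟨(-f a - (f a - f b) / (b - a) * a, (f a - f b) / (b - a)), ⟨by ring, ?_⟩, ?_⟩
  · field_simp; ring
  · rintro ⟨d₀, d₁⟩ ⟨ha, hb⟩
    have hd₁ := eq_div_of_add_affine_eq_zero hab ha hb
    refine Prod.ext ?_ hd₁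
    linear_combination ha - a * hd₁

end Interpolation

section Profile

variable {a b c κ C t w : ℝ}

theorem profile_eq_of_radicand_eq_sq (hw : 0 ≤ w) (h : κ * (t ^ 2 + C) = w ^ 2) :
    profile a b c κ C t = a * t ^ 2 + b * t ^ 3 - c * w ^ 3 := by
  rw [profile, h, ← rpow_natCast_mul hw]
  norm_num

theorem hasDerivAt_profile (hw : 0 ≤ w) (h : κ * (t ^ 2 + C) = w ^ 2) :
    HasDerivAt (profile a b c κ C) (2 * a * t + 3 * b * t ^ 2 - 3 * c * κ * t * w) t := by
  have hrad : HasDerivAt (fun s ↦ κ * (s ^ 2 + C)) (κ * (2 * t)) t := by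
    simpa using ((hasDerivAt_pow 2 t).add_const C).const_mul κ
  have hpow := (hrad.rpow_const (p := (3 : ℝ) / 2) (Or.inr (by norm_num))).const_mul c
  refine ((((hasDerivAt_pow 2 t).const_mul a).add
    ((hasDerivAt_pow 3 t).const_mul b)).sub hpow).congr_deriv ?_
  rw [h, ← rpow_natCast_mul hw]
  norm_num
  ring

theorem deriv_profile_add_affine (d₀ d₁ : ℝ) (hw : 0 ≤ w) (h : κ * (t ^ 2 + C) = w ^ 2) :
    deriv (fun s ↦ profile a b c κ C s + d₀ + d₁ * s) t
      = 2 * a * t + 3 * b * t ^ 2 - 3 * c * κ * t * w + d₁ :=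
  ((((hasDerivAt_profile hw h).add_const d₀).add
    ((hasDerivAt_id t).const_mul d₁)).congr_deriv (by ring)).deriv

end Profile

theorem radicand_sub_sq {x k l P Q t : ℝ} (hx : x ≠ 0) (hk : k ≠ 0) (hP : P ≠ 0)
    (hQ : Q ≠ 0) (hPQ : P - Q = 4 * k * l) :
    P * Q / (4 * k ^ 2) * (t ^ 2 + 4 * k * l * (P - x ^ 2 * Q) / (x ^ 2 * P * Q))
      - ((P + Q * (x * t - 1)) / (-2 * k * x)) ^ 2
      = l * Q / (k * x ^ 2) * ((x * t - 1) ^ 2 - x ^ 2) := by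
  obtain rfl : P = Q + 4 * k * l := by linear_combination hPQ
  field_simp
  ring

theorem deriv_profile_add_affine_of_eq_zero {x k l s B c κ C P Q d₀ d₁ : ℝ}
    (hx : 0 < x) (hk : k < 0) (hl : l ≠ 0)
    (hP : P = 1 + (k + l) ^ 2) (hQ : Q = 1 + (k - l) ^ 2) (hstab : x * Q < P)
    (hB : B = (s * x - 2) * P * (1 + k ^ 2 + l ^ 2) / (24 * k ^ 2 * l ^ 2) - (s * x + 1) / 3)
    (hc : c = -(k * (s * x - 2)) / (3 * Q * l ^ 2))
    (hκ : κ = P * Q / (4 * k ^ 2)) (hC : C = 4 * k * l * (P - x ^ 2 * Q) / (x ^ 2 * P * Q))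
    (hm : profile s B c κ C ((1 - x) / x) + d₀ + d₁ * ((1 - x) / x) = 0)
    (hp : profile s B c κ C ((1 + x) / x) + d₀ + d₁ * ((1 + x) / x) = 0) :
    deriv (fun t ↦ profile s B c κ C t + d₀ + d₁ * t) ((1 - x) / x) = 2 * ((1 - x) / x) ∧
      deriv (fun t ↦ profile s B c κ C t + d₀ + d₁ * t) ((1 + x) / x)
        = -(2 * ((1 + x) / x)) := by
  have hP0 : 0 < P := by rw [hP]; positivity
  have hQ0 : 0 < Q := by rw [hQ]; positivity
  have hkx : 0 < -2 * k * x := by nlinarith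
  have hrad : ∀ t, (x * t - 1) ^ 2 = x ^ 2 →
      κ * (t ^ 2 + C) = ((P + Q * (x * t - 1)) / (-2 * k * x)) ^ 2 := fun t ht ↦ by
    rw [← sub_eq_zero, hκ, hC, radicand_sub_sq hx.ne' hk.ne hP0.ne' hQ0.ne'
      (by rw [hP, hQ]; ring), ht, sub_self, mul_zero]
  have hxm : x * ((1 - x) / x) - 1 = -x := by field_simp; ring
  have hxp : x * ((1 + x) / x) - 1 = x := by field_simp; ring
  have hradm : κ * (((1 - x) / x) ^ 2 + C) = ((P - Q * x) / (-2 * k * x)) ^ 2 := by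
    rw [hrad _ (by rw [hxm, neg_sq]), hxm, mul_neg, ← sub_eq_add_neg]
  have hradp : κ * (((1 + x) / x) ^ 2 + C) = ((P + Q * x) / (-2 * k * x)) ^ 2 := by
    rw [hrad _ (by rw [hxp]), hxp]
  have hwm : 0 ≤ (P - Q * x) / (-2 * k * x) := div_nonneg (by linarith) hkx.le
  have hwp : 0 ≤ (P + Q * x) / (-2 * k * x) := div_nonneg (by positivity) hkx.le
  have hd₁ := eq_div_of_add_affine_eq_zero (by rw [Ne, div_left_inj' hx.ne']; linarith) hm hp
  rw [deriv_profile_add_affine d₀ d₁ hwm hradm, deriv_profile_add_affine d₀ d₁ hwp hradp,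
    hd₁, profile_eq_of_radicand_eq_sq hwm hradm, profile_eq_of_radicand_eq_sq hwp hradp]
  subst hB hc hκ hP hQ
  constructor <;> field_simp [hx.ne', hk.ne, hQ0.ne'] <;> ring

end MomentumProfile

theorem smooth_momentum_profile_bvp_general
    (x k1 k2 θ N P Q C tm tp : ℝ)
    (hx : x ∈ Set.Ioo (0 : ℝ) 1) (hk1 : k1 < 0) (hk2 : k2 ≠ 0)
    (hN : N = Real.sqrt ((1 - k1 ^ 2 + k2 ^ 2) ^ 2 + 4 * k1 ^ 2))
    (hcos : Real.cos θ = (1 - k1 ^ 2 + k2 ^ 2) / N)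
    (hsin : Real.sin θ = -(2 * k1) / N)
    (hP : P = 1 + (k1 + k2) ^ 2) (hQ : Q = 1 + (k1 - k2) ^ 2)
    (hC : C = 4 * k1 * k2 * (P - x ^ 2 * Q) / (x ^ 2 * N ^ 2))
    (htm : tm = (1 - x) / x) (htp : tp = (1 + x) / x)
    (hstab : P > x * Q)
    (sS shat rhat alpha : ℝ)
    (hshat : shat = 2 * x * sS + 2) (hrhat : rhat = N)
    (halpha : alpha = N * (-2 + sS * x) / (2 * (1 + (k1 - k2) ^ 2) * k2 ^ 2))
    (ψ : ℝ → ℝ → ℝ → ℝ)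
    (hψ : ψ = fun d0 d1 t => sS * t ^ 2
      + (alpha * Real.cos θ / (3 * Real.sin θ ^ 2) - (shat - alpha * rhat) / 6) * t ^ 3
      - (alpha / 3) * Real.sin θ * ((Real.cot θ ^ 2 + 1) * (t ^ 2 + C)) ^ ((3 : ℝ) / 2)
      + d0 + d1 * t) :
    (∃! p : ℝ × ℝ, ψ p.1 p.2 tm = 0 ∧ ψ p.1 p.2 tp = 0) ∧
    (∀ d0 d1 : ℝ, ψ d0 d1 tm = 0 → ψ d0 d1 tp = 0 →
      deriv (ψ d0 d1) tm = 2 * tm ∧ deriv (ψ d0 d1) tp = -(2 * tp)) := by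
  have hk : k1 ≠ 0 := hk1.ne
  have hQ0 : Q ≠ 0 := by rw [hQ]; positivity
  have hN0 : N ≠ 0 := by rw [hN]; positivity
  have hN2 : N ^ 2 = P * Q := by rw [hN, Real.sq_sqrt (by positivity), hP, hQ]; ring
  have hB : alpha * Real.cos θ / (3 * Real.sin θ ^ 2) - (shat - alpha * rhat) / 6
      = (sS * x - 2) * P * (1 + k1 ^ 2 + k2 ^ 2) / (24 * k1 ^ 2 * k2 ^ 2) - (sS * x + 1) / 3 := by
    rw [halpha, hcos, hsin, hshat, hrhat, ← hQ]
    field_simp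
    rw [hN2, hP, hQ]
    ring
  have hc : alpha / 3 * Real.sin θ = -(k1 * (sS * x - 2)) / (3 * Q * k2 ^ 2) := by
    rw [halpha, hsin, ← hQ]
    field_simp
    ring
  have hκ : Real.cot θ ^ 2 + 1 = P * Q / (4 * k1 ^ 2) := by
    rw [Real.cot_eq_cos_div_sin, hcos, hsin, div_div_div_cancel_right₀ hN0, hP, hQ]
    field_simp
    ring
  subst hψ htm htp
  have hC' : C = 4 * k1 * k2 * (P - x ^ 2 * Q) / (x ^ 2 * P * Q) := by rw [hC, hN2]; ring
  refine ⟨MomentumProfile.existsUnique_add_affine_eq_zero (MomentumProfile.profile sS _ _ _ C) ?_,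
    fun d₀ d₁ ↦ MomentumProfile.deriv_profile_add_affine_of_eq_zero hx.1 hk1 hk2 hP hQ hstab
      hB hc hκ hC'⟩
  rw [Ne, div_left_inj' hx.1.ne']
  linarith [hx.1]

/-- Under the stability condition there exist unique integration constants `d₀, d₁`
making `ψ` vanish at both endpoints, and for these constants the derivative boundary
conditions `ψ'(t₋) = 2t₋`, `ψ'(t₊) = −2t₊` hold automatically. -/
theorem smooth_momentum_profile_bvp
    (x k1 k2 θ N P Q C tm tp : ℝ)
    (hx : x ∈ Set.Ioo (0 : ℝ) 1) (hk1 : k1 < 0) (hk2 : k2 ≠ 0)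
    (hθ : θ ∈ Set.Ioo 0 Real.pi)
    (hN : N = Real.sqrt ((1 - k1 ^ 2 + k2 ^ 2) ^ 2 + 4 * k1 ^ 2))
    (hcos : Real.cos θ = (1 - k1 ^ 2 + k2 ^ 2) / N)
    (hsin : Real.sin θ = -(2 * k1) / N)
    (hP : P = 1 + (k1 + k2) ^ 2) (hQ : Q = 1 + (k1 - k2) ^ 2)
    (hC : C = 4 * k1 * k2 * (P - x ^ 2 * Q) / (x ^ 2 * N ^ 2))
    (htm : tm = (1 - x) / x) (htp : tp = (1 + x) / x)
    (hstab : P > x * Q)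
    (sS shat rhat alpha : ℝ)
    (hshat : shat = 2 * x * sS + 2) (hrhat : rhat = N)
    (halpha : alpha = N * (-2 + sS * x) / (2 * (1 + (k1 - k2) ^ 2) * k2 ^ 2))
    (ψ : ℝ → ℝ → ℝ → ℝ)
    (hψ : ψ = fun d0 d1 t => sS * t ^ 2
      + (alpha * Real.cos θ / (3 * Real.sin θ ^ 2) - (shat - alpha * rhat) / 6) * t ^ 3
      - (alpha / 3) * Real.sin θ * ((Real.cot θ ^ 2 + 1) * (t ^ 2 + C)) ^ ((3 : ℝ) / 2)
      + d0 + d1 * t) :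
    (∃! p : ℝ × ℝ, ψ p.1 p.2 tm = 0 ∧ ψ p.1 p.2 tp = 0) ∧
    (∀ d0 d1 : ℝ, ψ d0 d1 tm = 0 → ψ d0 d1 tp = 0 →
      deriv (ψ d0 d1) tm = 2 * tm ∧ deriv (ψ d0 d1) tp = -(2 * tp)) :=
  smooth_momentum_profile_bvp_general x k1 k2 θ N P Q C tm tp hx hk1 hk2 hN hcos hsin hP hQ hC htm
    htp hstab sS shat rhat alpha hshat hrhat halpha ψ hψ
end

section
/- Let a < b be real numbers and let ψ : [a,b] → ℝ be twice differentiable with continuous second derivative. Assume that ψ'' is convex on [a,b], that ψ(a) = ψ(b) = 0, that ψ'(a) > 0 and that ψ'(b) < 0. Then ψ(t) > 0 for every t ∈ (a,b). -/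
/-!
Suppose `ψ t ≤ 0` at some `t ∈ (a, b)`. The mean value theorem on `[a, t]` and `[t, b]` gives
`p < t < q` with `ψ' p ≤ 0 ≤ ψ' q`, so `ψ'` goes down from `a` to `p`, not down from `p` to `q`,
and down again from `q` to `b`. The mean value theorem for `ψ'` turns this into points
`w < u < v` with `ψ'' w < 0 ≤ ψ'' u` and `ψ'' v < 0`, which no convex `ψ''` allows.
-/

open Set

theorem exists_eq_slope_of_hasDerivWithinAt {f f' : ℝ → ℝ} {s : Set ℝ} {x y : ℝ}
    (hxy : x < y) (hs : Icc x y ⊆ s) (hf : ∀ t ∈ Icc x y, HasDerivWithinAt f (f' t) s t) :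
    ∃ u ∈ Ioo x y, f' u = (f y - f x) / (y - x) :=
  exists_hasDerivAt_eq_slope f f' hxy
    (fun t ht => ((hf t ht).mono hs).continuousWithinAt)
    (fun t ht => (hf t (Ioo_subset_Icc_self ht)).hasDerivAt
      (Filter.mem_of_superset (Icc_mem_nhds ht.1 ht.2) hs))

theorem lt_of_convexOn_deriv {g g' : ℝ → ℝ} {x₀ x₁ x₂ x₃ : ℝ}
    (hg : ∀ t ∈ Icc x₀ x₃, HasDerivWithinAt g (g' t) (Icc x₀ x₃) t)
    (hconv : ConvexOn ℝ (Icc x₀ x₃) g')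
    (h₀₁ : x₀ < x₁) (h₁₂ : x₁ < x₂) (h₂₃ : x₂ < x₃)
    (hdrop₀₁ : g x₁ < g x₀) (hdrop₂₃ : g x₃ < g x₂) :
    g x₂ < g x₁ := by
  have mvt : ∀ x y, x₀ ≤ x → x < y → y ≤ x₃ → ∃ u ∈ Ioo x y, g' u = (g y - g x) / (y - x) :=
    fun x y hx hxy hy => exists_eq_slope_of_hasDerivWithinAt hxy (Icc_subset_Icc hx hy)
      fun t ht => hg t ⟨hx.trans ht.1, ht.2.trans hy⟩
  obtain ⟨w, hw, hgw⟩ := mvt x₀ x₁ le_rfl h₀₁ (h₁₂.trans h₂₃).le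
  obtain ⟨u, hu, hgu⟩ := mvt x₁ x₂ h₀₁.le h₁₂ h₂₃.le
  obtain ⟨v, hv, hgv⟩ := mvt x₂ x₃ (h₀₁.trans h₁₂).le h₂₃ le_rfl
  have hw_neg : g' w < 0 := hgw ▸ div_neg_of_neg_of_pos (by linarith) (by linarith)
  have hv_neg : g' v < 0 := hgv ▸ div_neg_of_neg_of_pos (by linarith) (by linarith)
  have hu_neg : g' u < 0 :=
    (hconv.le_max_of_mem_Icc ⟨hw.1.le, by linarith [hw.2]⟩ ⟨by linarith [hv.1], hv.2.le⟩
      ⟨by linarith [hw.2, hu.1], by linarith [hu.2, hv.1]⟩).trans_lt (max_lt hw_neg hv_neg)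
  by_contra! hrise
  exact hu_neg.not_ge (hgu ▸ div_nonneg (by linarith) (by linarith))

theorem positivity_of_profile_general (a b : ℝ)
    (ψ ψ' ψ'' : ℝ → ℝ)
    (hderiv1 : ∀ t ∈ Set.Icc a b, HasDerivWithinAt ψ (ψ' t) (Set.Icc a b) t)
    (hderiv2 : ∀ t ∈ Set.Icc a b, HasDerivWithinAt ψ' (ψ'' t) (Set.Icc a b) t)
    (hconv : ConvexOn ℝ (Set.Icc a b) ψ'')
    (ha : ψ a = 0) (hb : ψ b = 0)
    (ha' : 0 < ψ' a) (hb' : ψ' b < 0) :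
    ∀ t ∈ Set.Ioo a b, 0 < ψ t := by
  intro t ⟨hat, htb⟩
  by_contra! hψt
  obtain ⟨p, hp, hψ'p⟩ := exists_eq_slope_of_hasDerivWithinAt hat (Icc_subset_Icc le_rfl htb.le)
    fun s hs => hderiv1 s ⟨hs.1, hs.2.trans htb.le⟩
  obtain ⟨q, hq, hψ'q⟩ := exists_eq_slope_of_hasDerivWithinAt htb (Icc_subset_Icc hat.le le_rfl)
    fun s hs => hderiv1 s ⟨hat.le.trans hs.1, hs.2⟩
  have hp_nonpos : ψ' p ≤ 0 := hψ'p ▸ div_nonpos_of_nonpos_of_nonneg (by linarith) (by linarith)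
  have hq_nonneg : 0 ≤ ψ' q := hψ'q ▸ div_nonneg (by linarith) (by linarith)
  have := lt_of_convexOn_deriv hderiv2 hconv hp.1 (hp.2.trans hq.1) hq.2 (by linarith) (by linarith)
  linarith

/-- Positivity lemma: if `ψ` is `C²` on `[a,b]` with `ψ''` convex, `ψ(a) = ψ(b) = 0`,
`ψ'(a) > 0` and `ψ'(b) < 0`, then `ψ > 0` on `(a,b)`. -/
theorem positivity_of_profile (a b : ℝ) (hab : a < b)
    (ψ ψ' ψ'' : ℝ → ℝ)
    (hderiv1 : ∀ t ∈ Set.Icc a b, HasDerivWithinAt ψ (ψ' t) (Set.Icc a b) t)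
    (hderiv2 : ∀ t ∈ Set.Icc a b, HasDerivWithinAt ψ' (ψ'' t) (Set.Icc a b) t)
    (hcont : ContinuousOn ψ'' (Set.Icc a b))
    (hconv : ConvexOn ℝ (Set.Icc a b) ψ'')
    (ha : ψ a = 0) (hb : ψ b = 0)
    (ha' : 0 < ψ' a) (hb' : ψ' b < 0) :
    ∀ t ∈ Set.Ioo a b, 0 < ψ t :=
  positivity_of_profile_general a b ψ ψ' ψ'' hderiv1 hderiv2 hconv ha hb ha' hb'
end

section
/- Let θ ∈ (0,π) and s_Σ, α, ŝ, r̂, C', d₀, d₁ ∈ ℝ, and define ψ(t) = s_Σ·t² + (α·cos θ/(3 sin²θ) − (ŝ − α·r̂)/6)·t³ − (α/3)·sin θ·((cot²θ + 1)(t² + C'))^{3/2} + d₀ + d₁·t. On any interval on which t² + C' > 0, ψ is four times differentiable and ψ''''(t) = −3α·(cot²θ + 1)·C'²·(t² + C')^{−5/2}. In particular, if α < 0 and C' ≠ 0, then ψ''''(t) > 0 there, so ψ'' is strictly convex on such an interval. -/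
/-! On the open set where `t² + C > 0` the identity `sin θ · (cot²θ + 1)^(3/2) = cot²θ + 1`
(valid because `sin θ > 0`) turns `ψ` into a cubic polynomial minus
`(α/3)(cot²θ + 1)(t² + C)^(3/2)`.
The cubic dies after four derivatives, while with `u = t² + C` the fourth derivative of `u^(3/2)`
is `9(u² - 2t²u + t⁴) u^(-5/2) = 9(u - t²)² u^(-5/2) = 9C² u^(-5/2)`. -/

open Set Filter Topology

section IterateDeriv

variable {𝕜 F : Type*} [NontriviallyNormedField 𝕜] [NormedAddCommGroup F] [NormedSpace 𝕜 F]
  {U : Set 𝕜} {ψ : 𝕜 → F} {f : ℕ → 𝕜 → F} {n : ℕ}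

theorem eqOn_iterate_deriv_of_hasDerivAt (hU : IsOpen U) (h0 : EqOn ψ (f 0) U)
    (hf : ∀ j < n, ∀ t ∈ U, HasDerivAt (f j) (f (j + 1) t) t) :
    ∀ j ≤ n, EqOn (deriv^[j] ψ) (f j) U := by
  intro j hj
  induction j with
  | zero => exact h0
  | succ j ih =>
    intro t ht
    have hloc : deriv^[j] ψ =ᶠ[𝓝 t] f j :=
      eventuallyEq_of_mem (hU.mem_nhds ht) (ih (by omega))
    rw [Function.iterate_succ_apply', hloc.deriv_eq, (hf j (by omega) t ht).deriv]

theorem hasDerivAt_iterate_deriv_of_hasDerivAt (hU : IsOpen U) (h0 : EqOn ψ (f 0) U)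
    (hf : ∀ j < n, ∀ t ∈ U, HasDerivAt (f j) (f (j + 1) t) t) :
    ∀ j < n, ∀ t ∈ U, HasDerivAt (deriv^[j] ψ) (deriv^[j + 1] ψ t) t := by
  intro j hj t ht
  have heq := eqOn_iterate_deriv_of_hasDerivAt hU h0 hf
  rw [heq (j + 1) hj ht]
  exact (hf j hj t ht).congr_of_eventuallyEq
    (eventuallyEq_of_mem (hU.mem_nhds ht) (heq j hj.le))

end IterateDeriv

namespace Real

theorem cot_sq_add_one_s8 {θ : ℝ} (h : sin θ ≠ 0) : cot θ ^ 2 + 1 = (sin θ)⁻¹ ^ 2 := by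
  rw [cot_eq_cos_div_sin]
  field_simp
  linarith [sin_sq_add_cos_sq θ]

theorem sin_mul_cot_sq_add_one_rpow_three_halves {θ : ℝ} (h : 0 < sin θ) :
    sin θ * (cot θ ^ 2 + 1) ^ ((3 : ℝ) / 2) = cot θ ^ 2 + 1 := by
  have hpow : ((sin θ)⁻¹ ^ 2) ^ ((3 : ℝ) / 2) = (sin θ)⁻¹ ^ 3 := by
    rw [← rpow_natCast (sin θ)⁻¹ 2, ← rpow_natCast (sin θ)⁻¹ 3, ← rpow_mul (by positivity)]
    norm_num
  rw [cot_sq_add_one_s8 h.ne', hpow]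
  field_simp

theorem sin_mul_rpow_three_halves_cot_sq_add_one_mul {θ u : ℝ} (h : 0 < sin θ) (hu : 0 ≤ u) :
    sin θ * ((cot θ ^ 2 + 1) * u) ^ ((3 : ℝ) / 2) = (cot θ ^ 2 + 1) * u ^ ((3 : ℝ) / 2) := by
  rw [mul_rpow (by positivity) hu, ← mul_assoc, sin_mul_cot_sq_add_one_rpow_three_halves h]

theorem hasDerivAt_sq_add_rpow {C t : ℝ} (p : ℝ) (ht : 0 < t ^ 2 + C) :
    HasDerivAt (fun t => (t ^ 2 + C) ^ p) (2 * t * p * (t ^ 2 + C) ^ (p - 1)) t := by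
  simpa using ((hasDerivAt_pow 2 t).add_const C).rpow_const (p := p) (Or.inl ht.ne')

end Real

open Real

theorem isOpen_setOf_pos_sq_add (C : ℝ) : IsOpen {t : ℝ | 0 < t ^ 2 + C} :=
  isOpen_lt continuous_const ((continuous_pow 2).add continuous_const)

/-- `sqAddRpowThreeHalvesDeriv C j` is the `j`-th derivative of `t ↦ (t² + C)^(3/2)` for `j ≤ 4`. -/
noncomputable def sqAddRpowThreeHalvesDeriv (C : ℝ) : ℕ → ℝ → ℝ
  | 0 => fun t => (t ^ 2 + C) ^ ((3 : ℝ) / 2)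
  | 1 => fun t => 3 * t * (t ^ 2 + C) ^ ((1 : ℝ) / 2)
  | 2 => fun t => 3 * (t ^ 2 + C) ^ ((1 : ℝ) / 2) + 3 * t ^ 2 * (t ^ 2 + C) ^ (-(1 : ℝ) / 2)
  | 3 => fun t => 9 * t * (t ^ 2 + C) ^ (-(1 : ℝ) / 2) - 3 * t ^ 3 * (t ^ 2 + C) ^ (-(3 : ℝ) / 2)
  | _ => fun t => 9 * C ^ 2 * (t ^ 2 + C) ^ (-(5 : ℝ) / 2)

theorem hasDerivAt_sqAddRpowThreeHalvesDeriv {C t : ℝ} (ht : 0 < t ^ 2 + C) :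
    ∀ j < 4, HasDerivAt (sqAddRpowThreeHalvesDeriv C j)
      (sqAddRpowThreeHalvesDeriv C (j + 1) t) t := by
  have hu (p q : ℝ) (hq : p - 1 = q) :
      HasDerivAt (fun t => (t ^ 2 + C) ^ p) (2 * t * p * (t ^ 2 + C) ^ q) t :=
    hq ▸ hasDerivAt_sq_add_rpow p ht
  intro j hj
  interval_cases j <;> simp only [sqAddRpowThreeHalvesDeriv]
  · refine (hu (3 / 2) (1 / 2) (by norm_num)).congr_deriv ?_
    ring
  · refine (((hasDerivAt_id' t).const_mul 3).mul
      (hu (1 / 2) (-1 / 2) (by norm_num))).congr_deriv ?_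
    ring
  · refine (((hu (1 / 2) (-1 / 2) (by norm_num)).const_mul 3).add
      (((hasDerivAt_pow 2 t).const_mul 3).mul
        (hu (-1 / 2) (-3 / 2) (by norm_num)))).congr_deriv ?_
    ring
  · refine ((((hasDerivAt_id' t).const_mul 9).mul (hu (-1 / 2) (-3 / 2) (by norm_num))).sub
      (((hasDerivAt_pow 3 t).const_mul 3).mul
        (hu (-3 / 2) (-5 / 2) (by norm_num)))).congr_deriv ?_
    have hu1 :
        (t ^ 2 + C) ^ (-(1 : ℝ) / 2) = (t ^ 2 + C) ^ 2 * (t ^ 2 + C) ^ (-(5 : ℝ) / 2) := by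
      rw [← rpow_natCast (t ^ 2 + C) 2, ← rpow_add ht]; norm_num
    have hu3 : (t ^ 2 + C) ^ (-(3 : ℝ) / 2) = (t ^ 2 + C) * (t ^ 2 + C) ^ (-(5 : ℝ) / 2) := by
      rw [← rpow_one_add' ht.le (by norm_num)]; norm_num
    rw [hu1, hu3]
    ring

section CubicSubThreeHalves

variable {ψ : ℝ → ℝ} {p : Polynomial ℝ} {B C : ℝ}

theorem hasDerivAt_eval_iterate_derivative_sub_sqAddRpowThreeHalvesDeriv {t : ℝ}
    (ht : 0 < t ^ 2 + C) :
    ∀ j < 4, HasDerivAt (fun t => (Polynomial.derivative^[j] p).eval t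
        - B * sqAddRpowThreeHalvesDeriv C j t)
      ((Polynomial.derivative^[j + 1] p).eval t - B * sqAddRpowThreeHalvesDeriv C (j + 1) t) t := by
  intro j hj
  have hpoly := (Polynomial.derivative^[j] p).hasDerivAt t
  rw [← Function.iterate_succ_apply' Polynomial.derivative] at hpoly
  exact hpoly.sub ((hasDerivAt_sqAddRpowThreeHalvesDeriv ht j hj).const_mul B)

theorem eqOn_iterate_deriv_of_eqOn_eval_sub_rpow
    (hψ : EqOn ψ (fun t => p.eval t - B * (t ^ 2 + C) ^ ((3 : ℝ) / 2)) {t | 0 < t ^ 2 + C}) :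
    ∀ j ≤ 4, EqOn (deriv^[j] ψ) (fun t => (Polynomial.derivative^[j] p).eval t
      - B * sqAddRpowThreeHalvesDeriv C j t) {t | 0 < t ^ 2 + C} :=
  eqOn_iterate_deriv_of_hasDerivAt (isOpen_setOf_pos_sq_add C) hψ
    fun j hj _ ht => hasDerivAt_eval_iterate_derivative_sub_sqAddRpowThreeHalvesDeriv ht j hj

theorem hasDerivAt_iterate_deriv_of_eqOn_eval_sub_rpow
    (hψ : EqOn ψ (fun t => p.eval t - B * (t ^ 2 + C) ^ ((3 : ℝ) / 2)) {t | 0 < t ^ 2 + C}) :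
    ∀ j < 4, ∀ t, 0 < t ^ 2 + C → HasDerivAt (deriv^[j] ψ) (deriv^[j + 1] ψ t) t :=
  hasDerivAt_iterate_deriv_of_hasDerivAt (isOpen_setOf_pos_sq_add C) hψ
    fun j hj _ ht => hasDerivAt_eval_iterate_derivative_sub_sqAddRpowThreeHalvesDeriv ht j hj

theorem iterate_deriv_four_of_eqOn_eval_sub_rpow (hp : p.natDegree ≤ 3)
    (hψ : EqOn ψ (fun t => p.eval t - B * (t ^ 2 + C) ^ ((3 : ℝ) / 2)) {t | 0 < t ^ 2 + C})
    {t : ℝ} (ht : 0 < t ^ 2 + C) :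
    deriv^[4] ψ t = -(9 * B * C ^ 2) * (t ^ 2 + C) ^ (-(5 : ℝ) / 2) := by
  rw [eqOn_iterate_deriv_of_eqOn_eval_sub_rpow hψ 4 le_rfl ht]
  simp only [Polynomial.iterate_derivative_eq_zero (hp.trans_lt (by norm_num : 3 < 4)),
    Polynomial.eval_zero, sqAddRpowThreeHalvesDeriv]
  ring

end CubicSubThreeHalves

/-- On any interval on which `t² + C' > 0`, `ψ` is four times differentiable with
`ψ''''(t) = −3α(cot²θ + 1)C'²(t² + C')^(−5/2)`; if moreover `α < 0` and `C' ≠ 0`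
then `ψ'''' > 0` there and `ψ''` is strictly convex on the interval. -/
theorem psi_fourth_derivative (θ sS alpha shat rhat C d0 d1 : ℝ)
    (hθ : θ ∈ Set.Ioo 0 Real.pi)
    (ψ : ℝ → ℝ)
    (hψ : ψ = fun t => sS * t ^ 2
      + (alpha * Real.cos θ / (3 * Real.sin θ ^ 2) - (shat - alpha * rhat) / 6) * t ^ 3
      - (alpha / 3) * Real.sin θ * ((Real.cot θ ^ 2 + 1) * (t ^ 2 + C)) ^ ((3 : ℝ) / 2)
      + d0 + d1 * t)
    (I : Set ℝ) (hIconv : Convex ℝ I) (hpos : ∀ t ∈ I, 0 < t ^ 2 + C) :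
    (∀ t ∈ I,
      (∀ j < 4, HasDerivAt (deriv^[j] ψ) (deriv^[j + 1] ψ t) t) ∧
      deriv^[4] ψ t
        = -3 * alpha * (Real.cot θ ^ 2 + 1) * C ^ 2 * (t ^ 2 + C) ^ (-(5 : ℝ) / 2) ∧
      (alpha < 0 → C ≠ 0 → 0 < deriv^[4] ψ t)) ∧
    (alpha < 0 → C ≠ 0 → StrictConvexOn ℝ I (deriv^[2] ψ)) := by
  have hsin : 0 < Real.sin θ := sin_pos_of_pos_of_lt_pi hθ.1 hθ.2
  set p : Polynomial ℝ :=
    Polynomial.C (alpha * Real.cos θ / (3 * Real.sin θ ^ 2) - (shat - alpha * rhat) / 6)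
      * Polynomial.X ^ 3 + Polynomial.C sS * Polynomial.X ^ 2 + Polynomial.C d1 * Polynomial.X
      + Polynomial.C d0
  have hψp : EqOn ψ
      (fun t => p.eval t - alpha / 3 * (Real.cot θ ^ 2 + 1) * (t ^ 2 + C) ^ ((3 : ℝ) / 2))
      {t | 0 < t ^ 2 + C} := by
    intro t ht
    simp only [hψ]
    rw [mul_assoc (alpha / 3), sin_mul_rpow_three_halves_cot_sq_add_one_mul hsin (le_of_lt ht)]
    simp only [p, Polynomial.eval_add, Polynomial.eval_mul, Polynomial.eval_C,
      Polynomial.eval_pow, Polynomial.eval_X]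
    ring
  have hderiv := hasDerivAt_iterate_deriv_of_eqOn_eval_sub_rpow hψp
  have h4 (t : ℝ) (ht : 0 < t ^ 2 + C) := iterate_deriv_four_of_eqOn_eval_sub_rpow
    Polynomial.natDegree_cubic_le hψp ht
  have h4pos (ha : alpha < 0) (hC : C ≠ 0) (t : ℝ) (ht : 0 < t ^ 2 + C) : 0 < deriv^[4] ψ t := by
    rw [h4 t ht]
    have hα : 0 < -alpha := by linarith
    have hu := rpow_pos_of_pos ht (-(5 : ℝ) / 2)
    rw [show -(9 * (alpha / 3 * (Real.cot θ ^ 2 + 1)) * C ^ 2)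
      = 3 * -alpha * (Real.cot θ ^ 2 + 1) * C ^ 2 by ring]
    positivity
  refine ⟨fun t ht => ⟨fun j hj => hderiv j hj t (hpos t ht), ?_,
    fun ha hC => h4pos ha hC t (hpos t ht)⟩, fun ha hC => ?_⟩
  · rw [h4 t (hpos t ht)]
    ring
  refine strictConvexOn_of_deriv2_pos' hIconv
    (fun t ht => (hderiv 2 (by norm_num) t (hpos t ht)).continuousAt.continuousWithinAt)
    fun t ht => ?_
  rw [← Function.iterate_add_apply]
  exact h4pos ha hC t (hpos t ht)
end

section
/- Assume the stability condition P > xQ, fix s_Σ ∈ ℝ and β₀ ∈ (0,1], and set β_∞ = (2 − β₀(1+x))/(1−x), ŝ = 2x·s_Σ + 2, r̂ = N and α = N·(s_Σ·x² − 3β₀(x+1) + x + 3)/(2k₂²·x·(1 + (k₁ − k₂)²)). Then there exist unique reals d₀, d₁ such that the function ψ defined with these constants satisfies ψ(t₋) = ψ(t₊) = 0; moreover, these unique d₀, d₁ automatically also satisfy ψ'(t₊) = −2β₀·t₊ and ψ'(t₋) = 2β_∞·t₋. -/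
/-!
Write `ψ d₀ d₁ = g + d₀ + d₁ t` with `g t = s_Σ t² - (ŝ/6) t³ + α φ t`, where
`φ t = (cos θ / (3 sin² θ) + r̂/6) t³ - (sin θ / 3) (K (t² + C))^{3/2}`, `K = cot² θ + 1`,
collects the terms carrying `α`. The two vanishing
conditions force `d₁ = -slope g t₋ t₊`, so `ψ'(t±) = g'(t±) - slope g t₋ t₊`.

With `m = 1/x` the endpoints are `t± = m ± 1`, and there the radicand is the perfect square
`((P m ± Q) / (-2 k₁))²`, whose root is positive thanks to `P > x Q`; this makes `φ` explicit at
the endpoints. Two identities then carry the proof: `φ'(t₊) = φ'(t₋)`, so `ψ'(t₋) - ψ'(t₊)` does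
not depend on `α`, which forces `β_∞`; and `φ'(t₊) - slope φ = N (P - Q)² / (12 k₁² P)`, which
pins down `α` from the condition at `t₊`.
-/

open Real

section Field

variable {𝕜 : Type*} [Field 𝕜] {g : 𝕜 → 𝕜} {t₁ t₂ d₀ d₁ : 𝕜}

theorem eq_neg_slope_of_add_affine_eq_zero (h : t₁ ≠ t₂) (h₁ : g t₁ + d₀ + d₁ * t₁ = 0)
    (h₂ : g t₂ + d₀ + d₁ * t₂ = 0) : d₁ = -slope g t₁ t₂ := by
  rw [slope_def_field, eq_neg_iff_add_eq_zero, add_div' _ _ _ (sub_ne_zero.2 h.symm),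
    div_eq_zero_iff]
  left
  linear_combination h₂ - h₁

theorem existsUnique_add_affine_eq_zero (g : 𝕜 → 𝕜) (h : t₁ ≠ t₂) :
    ∃! p : 𝕜 × 𝕜, g t₁ + p.1 + p.2 * t₁ = 0 ∧ g t₂ + p.1 + p.2 * t₂ = 0 := by
  have hs : slope g t₁ t₂ * (t₂ - t₁) = g t₂ - g t₁ := by
    rw [slope_def_field, div_mul_cancel₀ _ (sub_ne_zero.2 h.symm)]
  refine ⟨(slope g t₁ t₂ * t₁ - g t₁, -slope g t₁ t₂), ⟨by ring, by linear_combination -hs⟩, ?_⟩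
  rintro ⟨e₀, e₁⟩ ⟨h₁, h₂⟩
  have he₁ := eq_neg_slope_of_add_affine_eq_zero h h₁ h₂
  simp only [Prod.mk.injEq]
  exact ⟨by linear_combination h₁ - t₁ * he₁, he₁⟩

theorem slope_sq_add_cube_add_mul [NeZero (2 : 𝕜)] (φ : 𝕜 → 𝕜) (a b α m : 𝕜) :
    slope (fun t => a * t ^ 2 + b * t ^ 3 + α * φ t) (m - 1) (m + 1) =
      2 * a * m + b * (3 * m ^ 2 + 1) + α * slope φ (m - 1) (m + 1) := by
  simp only [slope_def_field, show m + 1 - (m - 1) = 2 by ring]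
  field_simp
  ring

end Field

section Deriv

variable {𝕜 : Type*} [NontriviallyNormedField 𝕜] {g : 𝕜 → 𝕜} {g' t t₁ t₂ d₀ d₁ : 𝕜}

theorem deriv_add_affine_of_eq_zero (hg : HasDerivAt g g' t) (h : t₁ ≠ t₂)
    (h₁ : g t₁ + d₀ + d₁ * t₁ = 0) (h₂ : g t₂ + d₀ + d₁ * t₂ = 0) :
    deriv (fun t => g t + d₀ + d₁ * t) t = g' - slope g t₁ t₂ := by
  have hψ : HasDerivAt (fun t => g t + d₀ + d₁ * t) (g' + d₁ * 1) t :=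
    (hg.add_const d₀).add ((hasDerivAt_id t).const_mul d₁)
  rw [hψ.deriv, eq_neg_slope_of_add_affine_eq_zero h h₁ h₂]
  ring

theorem hasDerivAt_sq_add_cube_add_mul (a b α : 𝕜) (hg : HasDerivAt g g' t) :
    HasDerivAt (fun t => a * t ^ 2 + b * t ^ 3 + α * g t)
      (2 * a * t + 3 * b * t ^ 2 + α * g') t := by
  have := (((hasDerivAt_pow 2 t).const_mul a).add ((hasDerivAt_pow 3 t).const_mul b)).add
    (hg.const_mul α)
  refine this.congr_deriv ?_
  norm_num
  ring

end Deriv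

noncomputable def couplingProfile (b c K C t : ℝ) : ℝ :=
  b * t ^ 3 - c * (K * (t ^ 2 + C)) ^ ((3 : ℝ) / 2)

section CouplingProfile

variable {b c K C t w : ℝ}

theorem couplingProfile_of_radicand_eq_sq (hw : 0 ≤ w) (h : K * (t ^ 2 + C) = w ^ 2) :
    couplingProfile b c K C t = b * t ^ 3 - c * w ^ 3 := by
  rw [couplingProfile, h, ← rpow_natCast w 2, ← rpow_mul hw]
  norm_num

theorem hasDerivAt_couplingProfile_of_radicand_eq_sq (hw : 0 ≤ w)
    (h : K * (t ^ 2 + C) = w ^ 2) :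
    HasDerivAt (couplingProfile b c K C) (3 * b * t ^ 2 - 3 * c * K * t * w) t := by
  have hR : HasDerivAt (fun t => K * (t ^ 2 + C)) (K * (2 * t)) t := by
    simpa using ((hasDerivAt_pow 2 t).add_const C).const_mul K
  have := ((hasDerivAt_pow 3 t).const_mul b).sub
    (((hasDerivAt_rpow_const (p := (3 : ℝ) / 2) (Or.inr (by norm_num))).comp t hR).const_mul c)
  refine this.congr_deriv ?_
  rw [h, ← rpow_natCast w 2, ← rpow_mul hw]
  norm_num
  ring

end CouplingProfile

section Endpoints

variable {P Q N k m b c K C σ : ℝ}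

theorem radicand_endpoint_eq_sq (hP : P ≠ 0) (hQ : Q ≠ 0) (hk : k ≠ 0)
    (hK : K = P * Q / (4 * k ^ 2)) (hC : C = (P - Q) * (P * m ^ 2 - Q) / (P * Q))
    (hσ : σ ^ 2 = 1) : K * ((m + σ) ^ 2 + C) = ((P * m + σ * Q) / (-(2 * k))) ^ 2 := by
  rw [hK, hC]
  field_simp
  linear_combination 4 * Q * (P - Q) * hσ

theorem endpoint_root_nonneg (hQ : 0 < Q) (hQPm : Q < P * m) (hk : k < 0) (hσ : σ ^ 2 = 1) :
    0 ≤ (P * m + σ * Q) / (-(2 * k)) := by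
  have : -1 ≤ σ := by nlinarith
  apply div_nonneg <;> nlinarith

variable (hP : 0 < P) (hQ : 0 < Q) (hQPm : Q < P * m) (hN : N ^ 2 = P * Q) (hk : k < 0)
  (hb : b = N * (P + Q) / (24 * k ^ 2)) (hc : c = -(2 * k) / (3 * N))
  (hK : K = P * Q / (4 * k ^ 2)) (hC : C = (P - Q) * (P * m ^ 2 - Q) / (P * Q))
include hP hQ hQPm hN hk hb hc hK hC

theorem hasDerivAt_couplingProfile_endpoints :
    HasDerivAt (couplingProfile b c K C) (-(N * (P - Q) * (m ^ 2 - 1) / (8 * k ^ 2))) (m - 1) ∧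
      HasDerivAt (couplingProfile b c K C) (-(N * (P - Q) * (m ^ 2 - 1) / (8 * k ^ 2)))
        (m + 1) := by
  have hN0 : N ≠ 0 := by rintro rfl; nlinarith
  have hcK : c * K = -(N / (6 * k)) := by
    rw [hc, hK, ← hN]; field_simp; ring
  have hend : ∀ σ : ℝ, σ ^ 2 = 1 → HasDerivAt (couplingProfile b c K C)
      (-(N * (P - Q) * (m ^ 2 - 1) / (8 * k ^ 2))) (m + σ) := fun σ hσ =>
    (hasDerivAt_couplingProfile_of_radicand_eq_sq (endpoint_root_nonneg hQ hQPm hk hσ)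
      (radicand_endpoint_eq_sq hP.ne' hQ.ne' hk.ne hK hC hσ)).congr_deriv <| by
        rw [mul_assoc 3 c K, hcK, hb]
        field_simp [hk.ne]
        linear_combination 288 * (P - Q) * hσ
  exact ⟨sub_eq_add_neg m 1 ▸ hend (-1) neg_one_sq, hend 1 (one_pow 2)⟩

theorem couplingProfile_slope_endpoints :
    slope (couplingProfile b c K C) (m - 1) (m + 1) =
      -(N * (P - Q) * (m ^ 2 - 1) / (8 * k ^ 2)) - N * (P - Q) ^ 2 / (12 * k ^ 2 * P) := by
  have h1 : (1 : ℝ) ^ 2 = 1 := one_pow 2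
  have h2 : (-1 : ℝ) ^ 2 = 1 := neg_one_sq
  have hc' : c = -(2 * k) * N / (3 * (P * Q)) := by
    have hN0 : N ≠ 0 := by rintro rfl; nlinarith
    rw [hc, ← hN]; field_simp
  rw [slope_def_field, sub_eq_add_neg m 1,
    couplingProfile_of_radicand_eq_sq (endpoint_root_nonneg hQ hQPm hk h1)
      (radicand_endpoint_eq_sq hP.ne' hQ.ne' hk.ne hK hC h1),
    couplingProfile_of_radicand_eq_sq (endpoint_root_nonneg hQ hQPm hk h2)
      (radicand_endpoint_eq_sq hP.ne' hQ.ne' hk.ne hK hC h2), hb, hc']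
  field_simp [hk.ne]
  ring

end Endpoints

theorem cot_sq_add_one_of_sin_eq {θ a N : ℝ} (hsin : sin θ = a / N) (ha : a ≠ 0) (hN : N ≠ 0) :
    cot θ ^ 2 + 1 = N ^ 2 / a ^ 2 := by
  rw [cot_eq_cos_div_sin, div_pow, cos_sq', hsin]
  field_simp
  ring

theorem conical_momentum_profile_bvp_general
    (x k1 k2 θ N P Q C tm tp : ℝ)
    (hx : x ∈ Set.Ioo (0 : ℝ) 1) (hk1 : k1 < 0) (hk2 : k2 ≠ 0)
    (hN : N = Real.sqrt ((1 - k1 ^ 2 + k2 ^ 2) ^ 2 + 4 * k1 ^ 2))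
    (hcos : Real.cos θ = (1 - k1 ^ 2 + k2 ^ 2) / N)
    (hsin : Real.sin θ = -(2 * k1) / N)
    (hP : P = 1 + (k1 + k2) ^ 2) (hQ : Q = 1 + (k1 - k2) ^ 2)
    (hC : C = 4 * k1 * k2 * (P - x ^ 2 * Q) / (x ^ 2 * N ^ 2))
    (htm : tm = (1 - x) / x) (htp : tp = (1 + x) / x)
    (hstab : P > x * Q)
    (sS beta0 betaInf shat rhat alpha : ℝ)
    (hbetaInf : betaInf = (2 - beta0 * (1 + x)) / (1 - x))
    (hshat : shat = 2 * x * sS + 2) (hrhat : rhat = N)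
    (halpha : alpha = N * (sS * x ^ 2 - 3 * beta0 * (x + 1) + x + 3)
      / (2 * k2 ^ 2 * x * (1 + (k1 - k2) ^ 2)))
    (ψ : ℝ → ℝ → ℝ → ℝ)
    (hψ : ψ = fun d0 d1 t => sS * t ^ 2
      + (alpha * Real.cos θ / (3 * Real.sin θ ^ 2) - (shat - alpha * rhat) / 6) * t ^ 3
      - (alpha / 3) * Real.sin θ * ((Real.cot θ ^ 2 + 1) * (t ^ 2 + C)) ^ ((3 : ℝ) / 2)
      + d0 + d1 * t) :
    (∃! p : ℝ × ℝ, ψ p.1 p.2 tm = 0 ∧ ψ p.1 p.2 tp = 0) ∧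
    (∀ d0 d1 : ℝ, ψ d0 d1 tm = 0 → ψ d0 d1 tp = 0 →
      deriv (ψ d0 d1) tp = -(2 * beta0 * tp) ∧ deriv (ψ d0 d1) tm = 2 * betaInf * tm) := by
  obtain ⟨hx0, hx1⟩ := hx
  have hP0 : 0 < P := by rw [hP]; positivity
  have hQ0 : 0 < Q := by rw [hQ]; positivity
  have hN2 : N ^ 2 = P * Q := by rw [hN, sq_sqrt (by positivity), hP, hQ]; ring
  have hN0 : N ≠ 0 := by rintro rfl; nlinarith
  have hQPm : Q < P * x⁻¹ := by rw [← div_eq_mul_inv, lt_div_iff₀ hx0]; linarith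
  have hb : cos θ / (3 * sin θ ^ 2) + rhat / 6 = N * (P + Q) / (24 * k1 ^ 2) := by
    rw [hcos, hsin, hrhat, hP, hQ]; field_simp [hk1.ne]; ring
  have hc : sin θ / 3 = -(2 * k1) / (3 * N) := by rw [hsin, div_div, mul_comm N]
  have hK : cot θ ^ 2 + 1 = P * Q / (4 * k1 ^ 2) := by
    rw [cot_sq_add_one_of_sin_eq hsin (by linarith) hN0, hN2]; ring
  have hC' : C = (P - Q) * (P * x⁻¹ ^ 2 - Q) / (P * Q) := by
    rw [hC, hN2, show 4 * k1 * k2 = P - Q by rw [hP, hQ]; ring]; field_simp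
  have hαD : alpha * (N * (P - Q) ^ 2 / (12 * k1 ^ 2 * P)) =
      2 * (sS * x ^ 2 - 3 * beta0 * (x + 1) + x + 3) / (3 * x) := by
    rw [halpha, ← hQ, show P - Q = 4 * k1 * k2 by rw [hP, hQ]; ring]
    field_simp [hk1.ne]
    rw [hN2]
    ring
  set φ := couplingProfile (cos θ / (3 * sin θ ^ 2) + rhat / 6) (sin θ / 3) (cot θ ^ 2 + 1) C
  obtain ⟨hφm, hφp⟩ := hasDerivAt_couplingProfile_endpoints hP0 hQ0 hQPm hN2 hk1 hb hc hK hC'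
  have hψφ : ψ = fun d0 d1 t => sS * t ^ 2 + -(shat / 6) * t ^ 3 + alpha * φ t + d0 + d1 * t := by
    rw [hψ]; funext d0 d1 t; simp only [φ, couplingProfile]; ring
  obtain rfl : tm = x⁻¹ - 1 := by rw [htm]; field_simp
  obtain rfl : tp = x⁻¹ + 1 := by rw [htp]; field_simp
  have hne : x⁻¹ - 1 ≠ x⁻¹ + 1 := by intro h; linarith
  subst hψφ
  refine ⟨existsUnique_add_affine_eq_zero (fun t => sS * t ^ 2 + -(shat / 6) * t ^ 3 + alpha * φ t)
    hne, fun d0 d1 h0 h1 => ?_⟩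
  rw [deriv_add_affine_of_eq_zero (hasDerivAt_sq_add_cube_add_mul _ _ _ hφp) hne h0 h1,
    deriv_add_affine_of_eq_zero (hasDerivAt_sq_add_cube_add_mul _ _ _ hφm) hne h0 h1,
    slope_sq_add_cube_add_mul,
    couplingProfile_slope_endpoints hP0 hQ0 hQPm hN2 hk1 hb hc hK hC',
    mul_sub alpha _ (N * (P - Q) ^ 2 / (12 * k1 ^ 2 * P)), hαD, hshat, hbetaInf]
  constructor <;> field_simp <;> ring

/-- Conical version of the boundary value problem: with the conical coupling
constant `α`, there exist unique `d₀, d₁` with `ψ(t₋) = ψ(t₊) = 0`, and these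
automatically satisfy `ψ'(t₊) = −2β₀t₊` and `ψ'(t₋) = 2β_∞t₋`. -/
theorem conical_momentum_profile_bvp
    (x k1 k2 θ N P Q C tm tp : ℝ)
    (hx : x ∈ Set.Ioo (0 : ℝ) 1) (hk1 : k1 < 0) (hk2 : k2 ≠ 0)
    (hθ : θ ∈ Set.Ioo 0 Real.pi)
    (hN : N = Real.sqrt ((1 - k1 ^ 2 + k2 ^ 2) ^ 2 + 4 * k1 ^ 2))
    (hcos : Real.cos θ = (1 - k1 ^ 2 + k2 ^ 2) / N)
    (hsin : Real.sin θ = -(2 * k1) / N)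
    (hP : P = 1 + (k1 + k2) ^ 2) (hQ : Q = 1 + (k1 - k2) ^ 2)
    (hC : C = 4 * k1 * k2 * (P - x ^ 2 * Q) / (x ^ 2 * N ^ 2))
    (htm : tm = (1 - x) / x) (htp : tp = (1 + x) / x)
    (hstab : P > x * Q)
    (sS beta0 betaInf shat rhat alpha : ℝ)
    (hbeta0 : beta0 ∈ Set.Ioc (0 : ℝ) 1)
    (hbetaInf : betaInf = (2 - beta0 * (1 + x)) / (1 - x))
    (hshat : shat = 2 * x * sS + 2) (hrhat : rhat = N)
    (halpha : alpha = N * (sS * x ^ 2 - 3 * beta0 * (x + 1) + x + 3)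
      / (2 * k2 ^ 2 * x * (1 + (k1 - k2) ^ 2)))
    (ψ : ℝ → ℝ → ℝ → ℝ)
    (hψ : ψ = fun d0 d1 t => sS * t ^ 2
      + (alpha * Real.cos θ / (3 * Real.sin θ ^ 2) - (shat - alpha * rhat) / 6) * t ^ 3
      - (alpha / 3) * Real.sin θ * ((Real.cot θ ^ 2 + 1) * (t ^ 2 + C)) ^ ((3 : ℝ) / 2)
      + d0 + d1 * t) :
    (∃! p : ℝ × ℝ, ψ p.1 p.2 tm = 0 ∧ ψ p.1 p.2 tp = 0) ∧
    (∀ d0 d1 : ℝ, ψ d0 d1 tm = 0 → ψ d0 d1 tp = 0 →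
      deriv (ψ d0 d1) tp = -(2 * beta0 * tp) ∧ deriv (ψ d0 d1) tm = 2 * betaInf * tm) :=
  conical_momentum_profile_bvp_general x k1 k2 θ N P Q C tm tp hx hk1 hk2 hN hcos hsin hP hQ hC htm
    htp hstab sS beta0 betaInf shat rhat alpha hbetaInf hshat hrhat halpha ψ hψ
end

section
/- Let k be a positive integer, h a nonnegative integer, and k₁ < 0, k₂ ≠ 0 real numbers. Set s_Σ = 2(1−h)/k, N = √((1 − k₁² + k₂²)² + 4k₁²) and, for k' > 0, x = k/(k + k'). Then there exist K > 0 and β* ∈ (0,1) such that for every k' > K and every β₀ ∈ (0, β*), the conical coupling constant α = N·(s_Σ·x² − 3β₀(x+1) + x + 3)/(2k₂²·x·(1 + (k₁ − k₂)²)) is strictly positive. -/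
/-- For sufficiently small cone angle `2πβ₀` and sufficiently large `k'`, the
conical coupling constant `α` is strictly positive. -/
theorem conical_coupling_constant_positive (k : ℕ) (hk : 0 < k) (h : ℕ)
    (k1 k2 : ℝ) (hk1 : k1 < 0) (hk2 : k2 ≠ 0)
    (sS N : ℝ)
    (hsS : sS = 2 * (1 - (h : ℝ)) / (k : ℝ))
    (hN : N = Real.sqrt ((1 - k1 ^ 2 + k2 ^ 2) ^ 2 + 4 * k1 ^ 2)) :
    ∃ K > (0 : ℝ), ∃ betaStar ∈ Set.Ioo (0 : ℝ) 1,
      ∀ k' > K, ∀ beta0 ∈ Set.Ioo (0 : ℝ) betaStar,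
        0 < N * (sS * ((k : ℝ) / ((k : ℝ) + k')) ^ 2
              - 3 * beta0 * ((k : ℝ) / ((k : ℝ) + k') + 1)
              + (k : ℝ) / ((k : ℝ) + k') + 3)
            / (2 * k2 ^ 2 * ((k : ℝ) / ((k : ℝ) + k')) * (1 + (k1 - k2) ^ 2)) := by
  have hk1ne : k1 ≠ 0 := ne_of_lt hk1
  have hNpos : 0 < N := by
    rw [hN]
    apply Real.sqrt_pos.mpr
    positivity
  have hkpos : (0:ℝ) < k := by exact_mod_cast hk
  refine ⟨(k:ℝ) * (|sS| + 1), by positivity, 1/4, ⟨by norm_num, by norm_num⟩, ?_⟩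
  intro k' hk' beta0 hb
  have habs : (0:ℝ) ≤ |sS| := abs_nonneg sS
  have hk'pos : (0:ℝ) < k' := lt_trans (by positivity) hk'
  have hden : (0:ℝ) < (k:ℝ) + k' := by linarith
  set x := (k:ℝ)/((k:ℝ)+k') with hx
  have hxpos : 0 < x := div_pos hkpos hden
  have hx1 : x < 1 := by
    rw [hx, div_lt_one hden]; linarith
  have h2 : (|sS| + 1) * x < 1 := by
    rw [hx, ← mul_div_assoc, div_lt_one hden]
    nlinarith
  have hxs : |sS| * x ^ 2 < 1 := by nlinarith
  have hnum : 0 < sS * x ^ 2 - 3 * beta0 * (x + 1) + x + 3 := by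
    have h3 : -|sS| ≤ sS := neg_abs_le sS
    have hb1 := hb.1
    have hb2 := hb.2
    nlinarith [sq_nonneg x, mul_pos hxpos hxpos]
  have hdpos : 0 < 2 * k2 ^ 2 * x * (1 + (k1 - k2) ^ 2) := by positivity
  exact div_pos (mul_pos hNpos hnum) hdpos
end

section
/- Let k be a positive integer, k' > 0 a real number, h an integer, β₀ a real number, and k₁, k₂ nonzero real numbers. Set x = k/(k + k') (so x ∈ (0,1)), s_Σ = 2(1−h)/k and Γ = (3 + x + s_Σ·x² − 3(1+x)β₀)/x. Then the equality (1 + k₁² + k₂²)(x − 1)(s_Σ·x² − 3β₀(x+1) + x + 3) = 2k₁k₂(−3β₀ + s_Σ·x³ − x²(β₀ + s_Σ − 1) + 3) holds if and only if ((1 + (k₁ + k₂)²)/(2k₁k₂))·Γ = 2·(2(1−h)/(k + k') + 2(k/k')(β₀ − 1) − 1). -/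
lemma aux_equiv (E F R Γ x k1 k2 : ℝ) (hx0 : x ≠ 0) (hx1 : x - 1 ≠ 0)
    (hk1 : k1 ≠ 0) (hk2 : k2 ≠ 0)
    (hG : Γ * x = E) (key : F = (x - 1) * (x * R - E)) :
    (1 + k1 ^ 2 + k2 ^ 2) * (x - 1) * E = 2 * k1 * k2 * F
      ↔ ((1 + (k1 + k2) ^ 2) / (2 * k1 * k2)) * Γ = R := by
  have h2 : (2 : ℝ) * k1 * k2 ≠ 0 := by positivity
  rw [div_mul_eq_mul_div, div_eq_iff h2]
  constructor
  · intro H1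
    have hxx : x * (x - 1) ≠ 0 := mul_ne_zero hx0 hx1
    have h3 : ((1 + (k1 + k2) ^ 2) * Γ - R * (2 * k1 * k2)) * (x * (x - 1)) = 0 := by
      linear_combination H1 + 2 * k1 * k2 * key + (x - 1) * (1 + (k1 + k2) ^ 2) * hG
    rcases mul_eq_zero.mp h3 with h | h
    · linarith [sub_eq_zero.mp h]
    · exact absurd h hxx
  · intro H2
    linear_combination x * (x - 1) * H2 - 2 * k1 * k2 * key - (x - 1) * (1 + (k1 + k2) ^ 2) * hG

/-- Algebraic equivalence of the twisted Kähler–Einstein criterion with the explicit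
cohomological condition in the parameters `k, k', h, β₀, k₁, k₂`. -/
theorem twisted_KE_criterion_equivalence (k : ℕ) (hk : 0 < k)
    (k' : ℝ) (hk' : 0 < k') (h : ℤ) (beta0 k1 k2 : ℝ)
    (hk1 : k1 ≠ 0) (hk2 : k2 ≠ 0)
    (x sS Γ : ℝ)
    (hx : x = (k : ℝ) / ((k : ℝ) + k'))
    (hsS : sS = 2 * (1 - (h : ℝ)) / (k : ℝ))
    (hΓ : Γ = (3 + x + sS * x ^ 2 - 3 * (1 + x) * beta0) / x) :
    (1 + k1 ^ 2 + k2 ^ 2) * (x - 1) * (sS * x ^ 2 - 3 * beta0 * (x + 1) + x + 3)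
        = 2 * k1 * k2 * (-3 * beta0 + sS * x ^ 3 - x ^ 2 * (beta0 + sS - 1) + 3)
      ↔ ((1 + (k1 + k2) ^ 2) / (2 * k1 * k2)) * Γ
        = 2 * (2 * (1 - (h : ℝ)) / ((k : ℝ) + k') + 2 * ((k : ℝ) / k') * (beta0 - 1) - 1) := by
  have hK : (0 : ℝ) < (k : ℝ) := by exact_mod_cast hk
  have hKk' : (0 : ℝ) < (k : ℝ) + k' := by linarith
  have hx0 : x ≠ 0 := by
    rw [hx]; positivity
  have hx1 : x - 1 ≠ 0 := by
    rw [hx]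
    have : (k : ℝ) / ((k : ℝ) + k') < 1 := by
      rw [div_lt_one hKk']; linarith
    linarith
  have hG : Γ * x = sS * x ^ 2 - 3 * beta0 * (x + 1) + x + 3 := by
    rw [hΓ, div_mul_cancel₀ _ hx0]; ring
  have key : (-3 * beta0 + sS * x ^ 3 - x ^ 2 * (beta0 + sS - 1) + 3)
      = (x - 1) * (x * (2 * (2 * (1 - (h : ℝ)) / ((k : ℝ) + k') + 2 * ((k : ℝ) / k') * (beta0 - 1) - 1))
        - (sS * x ^ 2 - 3 * beta0 * (x + 1) + x + 3)) := by
    subst hx hsS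
    field_simp
    ring
  exact aux_equiv _ _ _ _ _ _ _ hx0 hx1 hk1 hk2 hG key
end

section
/- Let k, k' > 0 and h be real numbers with 2(1 − h) < k + k'. Define D(β) = 2(1−h)/(k+k') + 3(k'/k)(1 − β) + 4 − 6β, Num(β) = 2·(2(1−h)/(k+k') + 2(β − 1)·k/k' − 1), and H(β) = Num(β)/D(β). Let β̄ = ((4/3)k + k' + 2(1−h)k/(3(k+k')))/(k' + 2k), which is the unique zero of D, and assume 0 < β̄ < 1. Then H(1) = (k + k' + 2(h−1))/(k + k' + h − 1) < 2, and for every y > H(1) there exists β ∈ (β̄, 1) with H(β) = y; in particular, every y > 2 is attained by H on (β̄, 1). -/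
set_option maxHeartbeats 1000000


/-- The right-hand side `H(β)` of the twisted Kähler–Einstein matching condition:
`β̄` is the unique zero of the denominator `D`, `H(1) = (k+k'+2(h−1))/(k+k'+h−1) < 2`,
and every value `y > H(1)` (in particular every `y > 2`) is attained by `H` on `(β̄, 1)`. -/
theorem twisted_KE_rhs_attains_values (k k' h : ℝ)
    (hk : 0 < k) (hk' : 0 < k') (hh : 2 * (1 - h) < k + k')
    (D Num H : ℝ → ℝ)
    (hD : D = fun β => 2 * (1 - h) / (k + k') + 3 * (k' / k) * (1 - β) + 4 - 6 * β)
    (hNum : Num = fun β => 2 * (2 * (1 - h) / (k + k') + 2 * (β - 1) * (k / k') - 1))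
    (hH : H = fun β => Num β / D β)
    (βbar : ℝ)
    (hβbar : βbar = ((4 / 3) * k + k' + 2 * (1 - h) * k / (3 * (k + k'))) / (k' + 2 * k))
    (hβbarIoo : βbar ∈ Set.Ioo (0 : ℝ) 1) :
    (D βbar = 0 ∧ ∀ β, D β = 0 → β = βbar) ∧
    H 1 = (k + k' + 2 * (h - 1)) / (k + k' + h - 1) ∧ H 1 < 2 ∧
    (∀ y > H 1, ∃ β ∈ Set.Ioo βbar 1, H β = y) ∧
    (∀ y > (2 : ℝ), ∃ β ∈ Set.Ioo βbar 1, H β = y) := by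
  obtain ⟨hβ0, hβ1⟩ := hβbarIoo
  have hkk : (0:ℝ) < k + k' := by linarith
  have hkk0 : (k + k') ≠ 0 := ne_of_gt hkk
  have hk0 : k ≠ 0 := ne_of_gt hk
  have hk'0 : k' ≠ 0 := ne_of_gt hk'
  have hk2 : (k' + 2*k) ≠ 0 := by positivity
  have hP : (0:ℝ) < k + k' + h - 1 := by linarith
  obtain ⟨s, hs_def⟩ : ∃ s : ℝ, s = 3 * (k'/k) + 6 := ⟨_, rfl⟩
  have hs : (0:ℝ) < s := by rw [hs_def]; positivity
  -- D βbar = 0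
  have hDzero : D βbar = 0 := by
    rw [hD, hβbar]
    field_simp
    ring
  -- D is affine with slope -s
  have hDaff : ∀ x y : ℝ, D x - D y = s * (y - x) := by
    intro x y; rw [hD, hs_def]; simp only; ring
  -- Num is affine
  have hNaff : ∀ x y : ℝ, Num x - Num y = 4 * (k/k') * (x - y) := by
    intro x y; rw [hNum]; simp only; ring
  -- uniqueness of the zero
  have huniq : ∀ β, D β = 0 → β = βbar := by
    intro β hβ
    have h1 : s * (βbar - β) = 0 := by
      have := hDaff β βbar; rw [hβ, hDzero] at this; linarith
    have := mul_eq_zero.1 h1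
    rcases this with h2 | h2
    · exact absurd h2 (ne_of_gt hs)
    · linarith
  -- D 1 < 0
  have hD1 : D 1 < 0 := by
    rw [hD]
    simp only
    have : 2 * (1 - h) / (k + k') < 2 := by
      rw [div_lt_iff₀ hkk]; linarith
    linarith [this]
  -- Num 1 < 0
  have hN1 : Num 1 < 0 := by
    rw [hNum]
    simp only
    have : 2 * (1 - h) / (k + k') < 1 := by
      rw [div_lt_iff₀ hkk]; linarith
    linarith [this]
  -- H 1 value
  have hH1 : H 1 = (k + k' + 2 * (h - 1)) / (k + k' + h - 1) := by
    rw [hH]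
    simp only
    rw [hNum, hD]
    simp only
    rw [div_eq_div_iff (by rw [hD] at hD1; simpa using ne_of_lt hD1) (by linarith)]
    field_simp
    ring
  have hH1lt : H 1 < 2 := by
    rw [hH1, div_lt_iff₀ hP]; linarith
  -- main attainment
  have hmain : ∀ y > H 1, ∃ β ∈ Set.Ioo βbar 1, H β = y := by
    intro y hy
    obtain ⟨M, hMy, hM1⟩ : ∃ M : ℝ, y ≤ M ∧ 1 ≤ M :=
      ⟨max y 1, le_max_left _ _, le_max_right _ _⟩
    have hM0 : (0:ℝ) < M := by linarith
    have hMs : 0 < M * s := by positivity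
    obtain ⟨δ, hδpos, hδlt, hδkey⟩ :
        ∃ δ : ℝ, 0 < δ ∧ δ < 1 - βbar ∧ M * s * δ ≤ -Num 1 / 2 := by
      refine ⟨min (1 - βbar) ((-Num 1) / (M * s)) / 2, ?_, ?_, ?_⟩
      · exact div_pos (lt_min (by linarith) (div_pos (by linarith) hMs)) two_pos
      · have h1 : min (1 - βbar) ((-Num 1) / (M * s)) ≤ 1 - βbar := min_le_left _ _
        have h2 : 0 < min (1 - βbar) ((-Num 1) / (M * s)) :=
          lt_min (by linarith) (div_pos (by linarith) hMs)
        linarith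
      · have h1 : min (1 - βbar) ((-Num 1) / (M * s)) ≤ (-Num 1) / (M * s) :=
          min_le_right _ _
        have h2 : min (1 - βbar) ((-Num 1) / (M * s)) * (M * s) ≤ -Num 1 :=
          (le_div_iff₀ hMs).1 h1
        nlinarith [h2]
    obtain ⟨t, ht_def⟩ : ∃ t : ℝ, t = βbar + δ := ⟨_, rfl⟩
    have ht1 : t < 1 := by rw [ht_def]; linarith
    have hβt : βbar < t := by rw [ht_def]; linarith
    -- D t = -s * δ
    have hDt : D t = -(s * δ) := by
      have h1 := hDaff t βbar
      rw [hDzero] at h1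
      rw [ht_def] at h1 ⊢
      nlinarith [h1]
    have hDtneg : D t < 0 := by rw [hDt]; nlinarith
    -- Num t ≤ y * D t
    have hkey : Num t ≤ y * D t := by
      have hNt : Num t < Num 1 := by
        have h1 := hNaff t 1
        nlinarith [mul_pos (mul_pos (by norm_num : (0:ℝ)<4) (div_pos hk hk'))
          (sub_pos.2 ht1)]
      have h4 : y * D t = -(y * (s * δ)) := by rw [hDt]; ring
      have h5 : y * (s * δ) ≤ M * (s * δ) := by
        apply mul_le_mul_of_nonneg_right hMy
        positivity
      nlinarith [hδkey, h4, h5, hNt, hN1]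

    -- H t ≥ y
    have hHt : y ≤ H t := by
      have hHt' : H t = Num t / D t := by rw [hH]
      rw [hHt', le_div_iff_of_neg hDtneg]
      linarith [hkey]
    -- D nonzero on [t, 1]
    have hDne : ∀ β ∈ Set.Icc t 1, D β ≠ 0 := by
      intro β hβ
      have h1 := hDaff β t
      have h2 : s * (t - β) ≤ 0 :=
        mul_nonpos_of_nonneg_of_nonpos hs.le (by linarith [hβ.1])
      linarith
    -- continuity
    have hcontD : ContinuousOn D (Set.Icc t 1) := by
      rw [hD]; fun_prop
    have hcontN : ContinuousOn Num (Set.Icc t 1) := by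
      rw [hNum]; fun_prop
    have hcontH : ContinuousOn H (Set.Icc t 1) := by
      rw [hH]
      exact hcontN.div hcontD hDne
    have hivt := intermediate_value_Icc' (le_of_lt ht1) hcontH
    have hy_mem : y ∈ Set.Icc (H 1) (H t) := ⟨le_of_lt hy, hHt⟩
    obtain ⟨β, hβmem, hβval⟩ := hivt hy_mem
    refine ⟨β, ⟨lt_of_lt_of_le hβt hβmem.1, ?_⟩, hβval⟩
    rcases lt_or_eq_of_le hβmem.2 with hlt | heq
    · exact hlt
    · exfalso; rw [heq] at hβval; linarith
  refine ⟨⟨hDzero, huniq⟩, hH1, hH1lt, hmain, ?_⟩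
  intro y hy
  exact hmain y (by linarith)
end

section
/- Fix real numbers x ∈ (0,1), k₁ < 0, k₂ ≠ 0 and t > 0. For α' > 0 define c(α') = −(1 − α'²k₁² + α'²k₂²)/(2α'k₁) and C'(α') = 4α'²k₁k₂·(1/(x²(1 + α'²(k₁ − k₂)²)) − 1/(1 + α'²(k₁ + k₂)²)), and, whenever t² + C'(α') > 0, set H_{α'}(t) = t·c(α') − √((c(α')² + 1)(t² + C'(α'))). Then t² + C'(α') > 0 for all sufficiently small α' > 0, and lim_{α'→0⁺} H_{α'}(t)/α' = k₁·t + (k₂/t)(1/x² − 1). -/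
set_option maxHeartbeats 1000000 in
/-- Large radius limit: for fixed `t > 0`, `t² + C'(α') > 0` for all sufficiently
small `α' > 0`, and `H_{α'}(t)/α' → k₁t + (k₂/t)(1/x² − 1)` as `α' → 0⁺`. -/
theorem large_radius_limit (x k1 k2 t : ℝ)
    (hx : x ∈ Set.Ioo (0 : ℝ) 1) (hk1 : k1 < 0) (hk2 : k2 ≠ 0) (ht : 0 < t)
    (c C H : ℝ → ℝ)
    (hc : ∀ a, c a = -(1 - a ^ 2 * k1 ^ 2 + a ^ 2 * k2 ^ 2) / (2 * a * k1))
    (hC : ∀ a, C a = 4 * a ^ 2 * k1 * k2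
      * (1 / (x ^ 2 * (1 + a ^ 2 * (k1 - k2) ^ 2)) - 1 / (1 + a ^ 2 * (k1 + k2) ^ 2)))
    (hH : ∀ a, H a = t * c a - Real.sqrt ((c a ^ 2 + 1) * (t ^ 2 + C a))) :
    (∀ᶠ a in nhdsWithin 0 (Set.Ioi (0 : ℝ)), 0 < t ^ 2 + C a) ∧
    Filter.Tendsto (fun a => H a / a) (nhdsWithin 0 (Set.Ioi (0 : ℝ)))
      (nhds (k1 * t + (k2 / t) * (1 / x ^ 2 - 1))) := by
  obtain ⟨hx0, hx1⟩ := hx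
  have hk1' : k1 ≠ 0 := ne_of_lt hk1
  have ht' : t ≠ 0 := ne_of_gt ht
  have hx' : x ≠ 0 := ne_of_gt hx0
  obtain ⟨V, hV⟩ : ∃ V : ℝ → ℝ, V = fun a => 4 * k1 * k2 *
    (1 / (x ^ 2 * (1 + a ^ 2 * (k1 - k2) ^ 2)) - 1 / (1 + a ^ 2 * (k1 + k2) ^ 2)) := ⟨_, rfl⟩
  obtain ⟨u, hu⟩ : ∃ u : ℝ → ℝ, u = fun a =>
    -(1 - a ^ 2 * k1 ^ 2 + a ^ 2 * k2 ^ 2) / (2 * k1) := ⟨_, rfl⟩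
  have pos1 : ∀ a : ℝ, 0 < x ^ 2 * (1 + a ^ 2 * (k1 - k2) ^ 2) := fun a => by positivity
  have pos2 : ∀ a : ℝ, 0 < 1 + a ^ 2 * (k1 + k2) ^ 2 := fun a => by positivity
  have hC2 : ∀ a, C a = a ^ 2 * V a := by
    intro a; rw [hC]; simp only [hV]; ring
  have hcontV : Continuous V := by
    rw [hV]
    exact continuous_const.mul
      ((continuous_const.div (by continuity) fun a => (pos1 a).ne').sub
       (continuous_const.div (by continuity) fun a => (pos2 a).ne'))
  have hcontu : Continuous u := by
    rw [hu]
    exact (by continuity : Continuous fun a : ℝ =>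
      -(1 - a ^ 2 * k1 ^ 2 + a ^ 2 * k2 ^ 2)).div_const _
  have hcontC : Continuous C := by
    have h : C = fun a => a ^ 2 * V a := funext hC2
    rw [h]; exact (continuous_pow 2).mul hcontV
  have hC0 : C 0 = 0 := by rw [hC2]; ring
  have hu0 : u 0 = -1 / (2 * k1) := by simp only [hu]; norm_num
  have hu0pos : 0 < u 0 := by
    rw [hu0]; exact div_pos_of_neg_of_neg (by norm_num) (by linarith)
  have hposC : ∀ᶠ a in nhds (0 : ℝ), 0 < t ^ 2 + C a := by
    have h : Filter.Tendsto (fun a : ℝ => t ^ 2 + C a) (nhds 0) (nhds (t ^ 2 + C 0)) :=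
      (continuous_const.add hcontC).tendsto 0
    rw [hC0, add_zero] at h
    exact h.eventually (eventually_gt_nhds (by positivity))
  have hupos : ∀ᶠ a in nhds (0 : ℝ), 0 < u a :=
    (hcontu.tendsto 0).eventually (eventually_gt_nhds hu0pos)
  obtain ⟨G, hG⟩ : ∃ G : ℝ → ℝ, G = fun a => -(u a ^ 2 * V a + (t ^ 2 + C a)) /
    (t * u a + Real.sqrt ((u a ^ 2 + a ^ 2) * (t ^ 2 + C a))) := ⟨_, rfl⟩
  have hsqrt0 : Real.sqrt ((u 0 ^ 2 + (0:ℝ) ^ 2) * (t ^ 2 + C 0)) = u 0 * t := by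
    rw [hC0]
    have h : (u 0 ^ 2 + (0:ℝ) ^ 2) * (t ^ 2 + 0) = (u 0 * t) ^ 2 := by ring
    rw [h, Real.sqrt_sq (mul_nonneg hu0pos.le ht.le)]
  have hden0 : (0:ℝ) < t * u 0 + Real.sqrt ((u 0 ^ 2 + (0:ℝ) ^ 2) * (t ^ 2 + C 0)) := by
    rw [hsqrt0]; linarith [mul_pos ht hu0pos, mul_pos hu0pos ht]
  have hcontG : ContinuousAt G 0 := by
    rw [hG]
    apply ContinuousAt.div
    · exact ((((hcontu.pow 2).mul hcontV).add
        (continuous_const.add hcontC)).neg).continuousAt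
    · exact ((continuous_const.mul hcontu).add
        (Real.continuous_sqrt.comp
          (((hcontu.pow 2).add (continuous_pow 2)).mul
            (continuous_const.add hcontC)))).continuousAt
    · exact hden0.ne'
  have hV0 : V 0 = 4 * k1 * k2 * (1 / x ^ 2 - 1) := by simp only [hV]; norm_num
  have hG0 : G 0 = k1 * t + k2 / t * (1 / x ^ 2 - 1) := by
    simp only [hG]
    rw [hsqrt0, hC0, hu0, hV0]
    field_simp
    ring
  have key : ∀ᶠ a in nhdsWithin (0:ℝ) (Set.Ioi (0:ℝ)), G a = H a / a := by
    filter_upwards [self_mem_nhdsWithin, hposC.filter_mono nhdsWithin_le_nhds,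
      hupos.filter_mono nhdsWithin_le_nhds] with a ha hP hua
    have ha0 : (0:ℝ) < a := ha
    have hane : a ≠ 0 := ha0.ne'
    have hca : c a = u a / a := by
      rw [hc]; simp only [hu]; rw [div_div]; congr 1; ring
    have hs2 : Real.sqrt ((u a ^ 2 + a ^ 2) * (t ^ 2 + C a)) ^ 2
        = (u a ^ 2 + a ^ 2) * (t ^ 2 + C a) :=
      Real.sq_sqrt (mul_nonneg (by positivity) hP.le)
    have hsnn : 0 ≤ Real.sqrt ((u a ^ 2 + a ^ 2) * (t ^ 2 + C a)) := Real.sqrt_nonneg _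
    have hdpos : 0 < t * u a + Real.sqrt ((u a ^ 2 + a ^ 2) * (t ^ 2 + C a)) := by
      linarith [mul_pos ht hua, hsnn]
    have hsqrtB : Real.sqrt ((c a ^ 2 + 1) * (t ^ 2 + C a))
        = Real.sqrt ((u a ^ 2 + a ^ 2) * (t ^ 2 + C a)) / a := by
      rw [hca]
      have h : ((u a / a) ^ 2 + 1) * (t ^ 2 + C a)
          = ((u a ^ 2 + a ^ 2) * (t ^ 2 + C a)) / a ^ 2 := by
        field_simp
      rw [h, Real.sqrt_div (mul_nonneg (by positivity) hP.le), Real.sqrt_sq ha0.le]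
    have hHa : H a / a = (t * u a - Real.sqrt ((u a ^ 2 + a ^ 2) * (t ^ 2 + C a))) / a ^ 2 := by
      rw [hH, hsqrtB, hca, ← mul_div_assoc, div_sub_div_same, div_div]
      congr 1
      ring
    rw [hHa]
    simp only [hG]
    rw [div_eq_div_iff hdpos.ne' (pow_ne_zero 2 hane)]
    rw [hC2 a] at hs2 ⊢
    linear_combination hs2
  refine ⟨hposC.filter_mono nhdsWithin_le_nhds, ?_⟩
  have htend : Filter.Tendsto G (nhdsWithin 0 (Set.Ioi (0:ℝ))) (nhds (G 0)) :=
    hcontG.continuousWithinAt.tendsto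
  rw [hG0] at htend
  exact htend.congr' key
end

section
/- Assume the stability condition P > xQ and fix s_Σ ≤ 2. Set ŝ = 2x·s_Σ + 2, r̂ = N and α = N(−2 + s_Σ·x)/(2Q·k₂²), and let (d₀, d₁) be the unique pair of reals such that ψ(t₋) = ψ(t₊) = 0. Then ψ(t) > 0 for every t ∈ (t₋, t₊). -/
/-!
Since `sin θ ((cot² θ + 1) u)^{3/2} = u √u / sin² θ`, `ψ` is a cubic polynomial plus
`c (t² + C)^{3/2}` with `c = -α / (3 sin² θ) ≥ 0` (this is where `s_Σ ≤ 2` enters), and the fourth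
derivative of `(t² + C)^{3/2}` is `9 C² (t² + C)^{-5/2} ≥ 0`, so `ψ'''` is monotone. The stability
condition makes `t² + C` positive on `[t₋, t₊]`, and the two boundary conditions, which fix `d₁`,
give `ψ'(t₋) = 2 t₋ > 0` and `ψ'(t₊) = -2 t₊ < 0`. If `ψ` vanished or were negative inside, Rolle's
theorem applied three times would make `ψ'''` first positive and then negative.
-/

open Set Real

section ThreeHalvesPower

variable {C t : ℝ}

theorem hasDerivAt_sqrt_sq_add (h : 0 < t ^ 2 + C) :
    HasDerivAt (fun s => √(s ^ 2 + C)) (t / √(t ^ 2 + C)) t := by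
  refine (((hasDerivAt_pow 2 t).add_const C).sqrt h.ne').congr_deriv ?_
  have : √(t ^ 2 + C) ≠ 0 := (sqrt_pos.2 h).ne'
  field_simp
  ring

theorem hasDerivAt_sq_add_mul_sqrt (h : 0 < t ^ 2 + C) :
    HasDerivAt (fun s => (s ^ 2 + C) * √(s ^ 2 + C)) (3 * t * √(t ^ 2 + C)) t := by
  refine (((hasDerivAt_pow 2 t).add_const C).fun_mul (hasDerivAt_sqrt_sq_add h)).congr_deriv ?_
  have hs : √(t ^ 2 + C) ≠ 0 := (sqrt_pos.2 h).ne'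
  field_simp
  simp only [sq_sqrt h.le]
  ring

theorem hasDerivAt_mul_sqrt_sq_add (h : 0 < t ^ 2 + C) :
    HasDerivAt (fun s => 3 * s * √(s ^ 2 + C)) (3 * (2 * t ^ 2 + C) / √(t ^ 2 + C)) t := by
  refine (((hasDerivAt_id' t).const_mul 3).fun_mul (hasDerivAt_sqrt_sq_add h)).congr_deriv ?_
  have hs : √(t ^ 2 + C) ≠ 0 := (sqrt_pos.2 h).ne'
  field_simp
  simp only [sq_sqrt h.le]
  ring

theorem hasDerivAt_div_sqrt_sq_add (h : 0 < t ^ 2 + C) :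
    HasDerivAt (fun s => 3 * (2 * s ^ 2 + C) / √(s ^ 2 + C))
      (3 * t * (2 * t ^ 2 + 3 * C) / ((t ^ 2 + C) * √(t ^ 2 + C))) t := by
  have hs : √(t ^ 2 + C) ≠ 0 := (sqrt_pos.2 h).ne'
  refine (((((hasDerivAt_pow 2 t).const_mul 2).add_const C).const_mul 3).fun_div
    (hasDerivAt_sqrt_sq_add h) hs).congr_deriv ?_
  field_simp
  simp only [sq_sqrt h.le]
  ring

theorem hasDerivAt_div_mul_sqrt_sq_add (h : 0 < t ^ 2 + C) :
    HasDerivAt (fun s => 3 * s * (2 * s ^ 2 + 3 * C) / ((s ^ 2 + C) * √(s ^ 2 + C)))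
      (9 * C ^ 2 / ((t ^ 2 + C) ^ 2 * √(t ^ 2 + C))) t := by
  have hs : √(t ^ 2 + C) ≠ 0 := (sqrt_pos.2 h).ne'
  refine ((((hasDerivAt_id' t).const_mul 3).fun_mul (((hasDerivAt_pow 2 t).const_mul 2).add_const
    (3 * C))).fun_div (hasDerivAt_sq_add_mul_sqrt h) (mul_ne_zero h.ne' hs)).congr_deriv ?_
  field_simp
  ring

end ThreeHalvesPower

theorem exists_mem_Ioo_hasDerivAt_mul_sub_eq {g g' : ℝ → ℝ} {s : Set ℝ} {a b : ℝ} (hab : a < b)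
    (hs : Icc a b ⊆ s) (hg : ∀ t ∈ s, HasDerivAt g (g' t) t) :
    ∃ c ∈ Ioo a b, g' c * (b - a) = g b - g a := by
  obtain ⟨c, hc, hc'⟩ := exists_hasDerivAt_eq_slope g g' hab
    (fun t ht => (hg t (hs ht)).continuousAt.continuousWithinAt)
    (fun t ht => hg t (hs (Ioo_subset_Icc_self ht)))
  exact ⟨c, hc, by rw [hc', div_mul_cancel₀ _ (sub_pos.2 hab).ne']⟩

theorem pos_of_monotoneOn_third_deriv {g g₁ g₂ g₃ : ℝ → ℝ} {a b : ℝ}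
    (hg : ∀ t ∈ Icc a b, HasDerivAt g (g₁ t) t)
    (hg₁ : ∀ t ∈ Icc a b, HasDerivAt g₁ (g₂ t) t)
    (hg₂ : ∀ t ∈ Icc a b, HasDerivAt g₂ (g₃ t) t)
    (hg₃ : MonotoneOn g₃ (Icc a b))
    (ha : g a = 0) (hb : g b = 0) (ha' : 0 < g₁ a) (hb' : g₁ b < 0) :
    ∀ t ∈ Ioo a b, 0 < g t := by
  rintro t₀ ⟨hat₀, ht₀b⟩
  by_contra! ht₀
  -- Rolle three times: the signs of `g₁` are `+, ≤ 0, ≥ 0, -`, those of `g₂` then `-, ≥ 0, -`,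
  -- and those of `g₃` then `+, -`, which a monotone `g₃` cannot do.
  obtain ⟨p₁, ⟨hap₁, hp₁t₀⟩, hp₁⟩ :=
    exists_mem_Ioo_hasDerivAt_mul_sub_eq hat₀ (Icc_subset_Icc le_rfl ht₀b.le) hg
  obtain ⟨p₂, ⟨ht₀p₂, hp₂b⟩, hp₂⟩ :=
    exists_mem_Ioo_hasDerivAt_mul_sub_eq ht₀b (Icc_subset_Icc hat₀.le le_rfl) hg
  have hgp₁ : g₁ p₁ ≤ 0 := by nlinarith
  have hgp₂ : 0 ≤ g₁ p₂ := by nlinarith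
  obtain ⟨q₁, ⟨haq₁, hq₁p₁⟩, hq₁⟩ := exists_mem_Ioo_hasDerivAt_mul_sub_eq hap₁
    (Icc_subset_Icc le_rfl (by linarith)) hg₁
  obtain ⟨q₂, ⟨hp₁q₂, hq₂p₂⟩, hq₂⟩ := exists_mem_Ioo_hasDerivAt_mul_sub_eq (hp₁t₀.trans ht₀p₂)
    (Icc_subset_Icc hap₁.le hp₂b.le) hg₁
  obtain ⟨q₃, ⟨hp₂q₃, hq₃b⟩, hq₃⟩ := exists_mem_Ioo_hasDerivAt_mul_sub_eq hp₂b
    (Icc_subset_Icc (by linarith) le_rfl) hg₁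
  have hgq₁ : g₂ q₁ < 0 := by nlinarith
  have hgq₂ : 0 ≤ g₂ q₂ := by nlinarith
  have hgq₃ : g₂ q₃ < 0 := by nlinarith
  obtain ⟨r₁, ⟨hq₁r₁, hr₁q₂⟩, hr₁⟩ := exists_mem_Ioo_hasDerivAt_mul_sub_eq (hq₁p₁.trans hp₁q₂)
    (Icc_subset_Icc haq₁.le (by linarith)) hg₂
  obtain ⟨r₂, ⟨hq₂r₂, hr₂q₃⟩, hr₂⟩ := exists_mem_Ioo_hasDerivAt_mul_sub_eq (hq₂p₂.trans hp₂q₃)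
    (Icc_subset_Icc (by linarith) hq₃b.le) hg₂
  have hgr₁ : 0 < g₃ r₁ := by nlinarith
  have hgr₂ : g₃ r₂ < 0 := by nlinarith
  have := hg₃ ⟨by linarith, by linarith⟩ ⟨by linarith, by linarith⟩ (hr₁q₂.trans hq₂r₂).le
  linarith

noncomputable def momentumProfile (A B c C d₀ d₁ t : ℝ) : ℝ :=
  A * t ^ 2 + B * t ^ 3 + c * ((t ^ 2 + C) * √(t ^ 2 + C)) + d₀ + d₁ * t

noncomputable def momentumProfileDeriv (A B c C d₁ t : ℝ) : ℝ :=
  2 * A * t + 3 * B * t ^ 2 + c * (3 * t * √(t ^ 2 + C)) + d₁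

theorem momentumProfile_pos {A B c C d₀ d₁ a b : ℝ} (hc : 0 ≤ c)
    (hC : ∀ t ∈ Icc a b, 0 < t ^ 2 + C)
    (ha : momentumProfile A B c C d₀ d₁ a = 0) (hb : momentumProfile A B c C d₀ d₁ b = 0)
    (ha' : 0 < momentumProfileDeriv A B c C d₁ a) (hb' : momentumProfileDeriv A B c C d₁ b < 0) :
    ∀ t ∈ Ioo a b, 0 < momentumProfile A B c C d₀ d₁ t := by
  set g₂ := fun t => 2 * A + 6 * B * t + c * (3 * (2 * t ^ 2 + C) / √(t ^ 2 + C))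
  set g₃ := fun t => 6 * B + c * (3 * t * (2 * t ^ 2 + 3 * C) / ((t ^ 2 + C) * √(t ^ 2 + C)))
  have hg : ∀ t ∈ Icc a b, HasDerivAt (momentumProfile A B c C d₀ d₁)
      (momentumProfileDeriv A B c C d₁ t) t := fun t ht => by
    have := (((((hasDerivAt_pow 2 t).const_mul A).add ((hasDerivAt_pow 3 t).const_mul B)).add
      ((hasDerivAt_sq_add_mul_sqrt (hC t ht)).const_mul c)).add_const d₀).add
      ((hasDerivAt_id' t).const_mul d₁)
    refine this.congr_deriv ?_
    simp only [momentumProfileDeriv]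
    ring
  have hg₁ : ∀ t ∈ Icc a b, HasDerivAt (momentumProfileDeriv A B c C d₁) (g₂ t) t := fun t ht => by
    have := ((((hasDerivAt_id' t).const_mul (2 * A)).add
      ((hasDerivAt_pow 2 t).const_mul (3 * B))).add
      ((hasDerivAt_mul_sqrt_sq_add (hC t ht)).const_mul c)).add_const d₁
    refine this.congr_deriv ?_
    simp only [g₂]
    ring
  have hg₂ : ∀ t ∈ Icc a b, HasDerivAt g₂ (g₃ t) t := fun t ht => by
    have := ((hasDerivAt_id' t).const_mul (6 * B)).const_add (2 * A) |>.add
      ((hasDerivAt_div_sqrt_sq_add (hC t ht)).const_mul c)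
    refine this.congr_deriv ?_
    simp only [g₃]
    ring
  have hg₃ : MonotoneOn g₃ (Icc a b) := by
    have hd : ∀ t ∈ Icc a b, HasDerivAt g₃ (c * (9 * C ^ 2 / ((t ^ 2 + C) ^ 2 * √(t ^ 2 + C)))) t :=
      fun t ht => ((hasDerivAt_div_mul_sqrt_sq_add (hC t ht)).const_mul c).const_add (6 * B)
    refine monotoneOn_of_hasDerivWithinAt_nonneg (convex_Icc a b)
      (fun t ht => (hd t ht).continuousAt.continuousWithinAt)
      (fun t ht => (hd t (interior_subset ht)).hasDerivWithinAt) (fun t ht => ?_)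
    have := hC t (interior_subset ht)
    positivity
  exact pos_of_monotoneOn_third_deriv hg hg₁ hg₂ hg₃ ha hb ha' hb'

theorem sin_mul_rpow_three_halves {θ u : ℝ} (hθ : 0 < sin θ) (hu : 0 ≤ u) :
    sin θ * ((cot θ ^ 2 + 1) * u) ^ ((3 : ℝ) / 2) = u * √u / sin θ ^ 2 := by
  have hcot : cot θ ^ 2 + 1 = (sin θ ^ 2)⁻¹ := by
    rw [cot_eq_cos_div_sin]
    field_simp
    exact cos_sq_add_sin_sq θ
  rw [hcot, show (3 : ℝ) / 2 = 1 + 1 / 2 by norm_num, rpow_add' (by positivity) (by norm_num),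
    rpow_one, ← sqrt_eq_rpow, sqrt_mul (by positivity), sqrt_inv, sqrt_sq hθ.le]
  field_simp

section Boundary

variable {x P Q N sS B c C d₀ d₁ : ℝ}

theorem sq_add_eq_at_boundary (hx : x ≠ 0) (hP : P ≠ 0) (hQ : Q ≠ 0)
    (hC : C = (P - Q) * (P - x ^ 2 * Q) / (x ^ 2 * (P * Q))) :
    ((1 - x) / x) ^ 2 + C = (P - x * Q) ^ 2 / (x ^ 2 * (P * Q)) ∧
      ((1 + x) / x) ^ 2 + C = (P + x * Q) ^ 2 / (x ^ 2 * (P * Q)) := by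
  rw [hC]
  constructor <;> field_simp <;> ring

theorem sq_add_pos_of_mem_boundary_Icc (hx₀ : 0 < x) (hx₁ : x < 1) (hQ : 0 < Q)
    (hstab : x * Q < P) (hC : C = (P - Q) * (P - x ^ 2 * Q) / (x ^ 2 * (P * Q))) :
    ∀ t ∈ Icc ((1 - x) / x) ((1 + x) / x), 0 < t ^ 2 + C := by
  rintro t ⟨ht, -⟩
  have hP : 0 < P := by nlinarith
  have hm := (sq_add_eq_at_boundary hx₀.ne' hP.ne' hQ.ne' hC).1
  have hm₀ : 0 < (P - x * Q) ^ 2 / (x ^ 2 * (P * Q)) := by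
    have := sub_pos.2 hstab
    positivity
  have := pow_le_pow_left₀ (div_nonneg (by linarith) hx₀.le) ht 2
  linarith

theorem momentumProfileDeriv_boundary (hx : 0 < x) (hQ : 0 < Q) (hPQ : P ≠ Q)
    (hstab : x * Q < P) (hN : 0 < N) (hN2 : N ^ 2 = P * Q)
    (hB : B = P * (sS * x - 2) * (P + Q) / (3 * (P - Q) ^ 2) - (x * sS + 1) / 3)
    (hc : c = 2 * N * P * (2 - sS * x) / (3 * (P - Q) ^ 2))
    (hC : C = (P - Q) * (P - x ^ 2 * Q) / (x ^ 2 * (P * Q)))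
    (h₀ : momentumProfile sS B c C d₀ d₁ ((1 - x) / x) = 0)
    (h₁ : momentumProfile sS B c C d₀ d₁ ((1 + x) / x) = 0) :
    momentumProfileDeriv sS B c C d₁ ((1 - x) / x) = 2 * ((1 - x) / x) ∧
      momentumProfileDeriv sS B c C d₁ ((1 + x) / x) = -(2 * ((1 + x) / x)) := by
  have hd₁ : d₁ = (momentumProfile sS B c C 0 0 ((1 - x) / x)
      - momentumProfile sS B c C 0 0 ((1 + x) / x)) / 2 := by
    have htp : (1 + x) / x = (1 - x) / x + 2 := by field_simp; ring
    rw [htp] at h₁ ⊢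
    unfold momentumProfile at h₀ h₁ ⊢
    linear_combination (h₁ - h₀) / 2
  have hP : 0 < P := by nlinarith
  obtain ⟨hm, hp⟩ := sq_add_eq_at_boundary hx.ne' hP.ne' hQ.ne' hC
  have hsm : √(((1 - x) / x) ^ 2 + C) = (P - x * Q) / (x * N) := by
    rw [hm, ← hN2, ← mul_pow, ← div_pow, sqrt_sq (div_nonneg (by linarith) (by positivity))]
  have hsp : √(((1 + x) / x) ^ 2 + C) = (P + x * Q) / (x * N) := by
    rw [hp, ← hN2, ← mul_pow, ← div_pow, sqrt_sq (by positivity)]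
  have hPQ' : P - Q ≠ 0 := sub_ne_zero.2 hPQ
  -- `N` now only enters through `c √(t² + C)`, where it cancels
  rw [hd₁]
  unfold momentumProfile momentumProfileDeriv
  rw [hsm, hsp, hm, hp, hB, hc]
  constructor <;> field_simp <;> ring

theorem momentumProfile_pos_of_boundary (hx₀ : 0 < x) (hx₁ : x < 1) (hQ : 0 < Q) (hPQ : P ≠ Q)
    (hstab : x * Q < P) (hN : 0 < N) (hN2 : N ^ 2 = P * Q) (hsS : sS ≤ 2)
    (hB : B = P * (sS * x - 2) * (P + Q) / (3 * (P - Q) ^ 2) - (x * sS + 1) / 3)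
    (hc : c = 2 * N * P * (2 - sS * x) / (3 * (P - Q) ^ 2))
    (hC : C = (P - Q) * (P - x ^ 2 * Q) / (x ^ 2 * (P * Q)))
    (h₀ : momentumProfile sS B c C d₀ d₁ ((1 - x) / x) = 0)
    (h₁ : momentumProfile sS B c C d₀ d₁ ((1 + x) / x) = 0) :
    ∀ t ∈ Ioo ((1 - x) / x) ((1 + x) / x), 0 < momentumProfile sS B c C d₀ d₁ t := by
  obtain ⟨hslope₀, hslope₁⟩ := momentumProfileDeriv_boundary hx₀ hQ hPQ hstab hN hN2 hB hc hC h₀ h₁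
  have hc₀ : 0 ≤ c := by
    have hP : 0 < P := by nlinarith
    have : 0 < 2 - sS * x := by nlinarith
    rw [hc]
    positivity
  refine momentumProfile_pos hc₀ (sq_add_pos_of_mem_boundary_Icc hx₀ hx₁ hQ hstab hC) h₀ h₁ ?_ ?_
  · rw [hslope₀]
    have := sub_pos.2 hx₁
    positivity
  · rw [hslope₁]
    exact neg_neg_of_pos (by positivity)

end Boundary

theorem momentumProfile_coeffs_eq {x k1 k2 θ N P Q sS alpha : ℝ} (hk1 : k1 ≠ 0) (hk2 : k2 ≠ 0)
    (hN : N ≠ 0) (hcos : cos θ = (1 - k1 ^ 2 + k2 ^ 2) / N) (hsin : sin θ = -(2 * k1) / N)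
    (hP : P = 1 + (k1 + k2) ^ 2) (hQ : Q = 1 + (k1 - k2) ^ 2) (hN2 : N ^ 2 = P * Q)
    (halpha : alpha = N * (-2 + sS * x) / (2 * Q * k2 ^ 2)) :
    -alpha / (3 * sin θ ^ 2) = 2 * N * P * (2 - sS * x) / (3 * (P - Q) ^ 2) ∧
      alpha * cos θ / (3 * sin θ ^ 2) - (2 * x * sS + 2 - alpha * N) / 6 =
        P * (sS * x - 2) * (P + Q) / (3 * (P - Q) ^ 2) - (x * sS + 1) / 3 := by
  have hQ0 : Q ≠ 0 := by rw [hQ]; positivity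
  have hPQ : P - Q = 4 * k1 * k2 := by rw [hP, hQ]; ring
  rw [hPQ, halpha, hsin]
  constructor
  · field_simp
    linear_combination 16 * (2 - sS * x) * hN2
  · rw [hcos]
    field_simp
    rw [hP, hQ] at hN2 ⊢
    linear_combination 96 * (sS * x - 2) * (1 + k1 ^ 2 + k2 ^ 2) * hN2

theorem smooth_momentum_profile_positive_general
    (x k1 k2 θ N P Q C tm tp : ℝ)
    (hx : x ∈ Set.Ioo (0 : ℝ) 1) (hk1 : k1 < 0) (hk2 : k2 ≠ 0)
    (hN : N = Real.sqrt ((1 - k1 ^ 2 + k2 ^ 2) ^ 2 + 4 * k1 ^ 2))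
    (hcos : Real.cos θ = (1 - k1 ^ 2 + k2 ^ 2) / N)
    (hsin : Real.sin θ = -(2 * k1) / N)
    (hP : P = 1 + (k1 + k2) ^ 2) (hQ : Q = 1 + (k1 - k2) ^ 2)
    (hC : C = 4 * k1 * k2 * (P - x ^ 2 * Q) / (x ^ 2 * N ^ 2))
    (htm : tm = (1 - x) / x) (htp : tp = (1 + x) / x)
    (hstab : P > x * Q)
    (sS : ℝ) (hsS : sS ≤ 2)
    (shat rhat alpha : ℝ)
    (hshat : shat = 2 * x * sS + 2) (hrhat : rhat = N)
    (halpha : alpha = N * (-2 + sS * x) / (2 * Q * k2 ^ 2))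
    (ψ : ℝ → ℝ → ℝ → ℝ)
    (hψ : ψ = fun d0 d1 t => sS * t ^ 2
      + (alpha * Real.cos θ / (3 * Real.sin θ ^ 2) - (shat - alpha * rhat) / 6) * t ^ 3
      - (alpha / 3) * Real.sin θ * ((Real.cot θ ^ 2 + 1) * (t ^ 2 + C)) ^ ((3 : ℝ) / 2)
      + d0 + d1 * t)
    (d0 d1 : ℝ)
    (hbc0 : ψ d0 d1 tm = 0) (hbc1 : ψ d0 d1 tp = 0) :
    ∀ t ∈ Set.Ioo tm tp, 0 < ψ d0 d1 t := by
  obtain ⟨hx₀, hx₁⟩ := hx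
  subst htm htp
  have hQ0 : 0 < Q := by rw [hQ]; positivity
  have hN2 : N ^ 2 = P * Q := by rw [hN, sq_sqrt (by positivity), hP, hQ]; ring
  have hN0 : 0 < N := by rw [hN]; have := hk1.ne; positivity
  have hsin0 : 0 < sin θ := by rw [hsin]; exact div_pos (by linarith) hN0
  have hPQ : P - Q = 4 * k1 * k2 := by rw [hP, hQ]; ring
  have hPQ' : P ≠ Q := sub_ne_zero.1 (hPQ ▸ mul_ne_zero (mul_ne_zero four_ne_zero hk1.ne) hk2)
  have hC' : C = (P - Q) * (P - x ^ 2 * Q) / (x ^ 2 * (P * Q)) := by rw [hC, hPQ, hN2]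
  obtain ⟨hc, hB⟩ := momentumProfile_coeffs_eq hk1.ne hk2 hN0.ne' hcos hsin hP hQ hN2 halpha
  have hCpos := sq_add_pos_of_mem_boundary_Icc hx₀ hx₁ hQ0 hstab hC'
  have hψ' : ∀ t ∈ Icc ((1 - x) / x) ((1 + x) / x), ψ d0 d1 t = momentumProfile sS
      (alpha * cos θ / (3 * sin θ ^ 2) - (2 * x * sS + 2 - alpha * N) / 6)
      (-alpha / (3 * sin θ ^ 2)) C d0 d1 t := fun t ht => by
    simp only [hψ, hshat, hrhat, momentumProfile]
    rw [mul_assoc (alpha / 3), sin_mul_rpow_three_halves hsin0 (hCpos t ht).le]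
    ring
  have hx : (1 - x) / x ≤ (1 + x) / x := by gcongr; linarith
  rw [hψ' _ (left_mem_Icc.2 hx)] at hbc0
  rw [hψ' _ (right_mem_Icc.2 hx)] at hbc1
  intro t ht
  rw [hψ' t (Ioo_subset_Icc_self ht)]
  exact momentumProfile_pos_of_boundary hx₀ hx₁ hQ0 hPQ' hstab hN0 hN2 hsS hB hc hC' hbc0 hbc1 t ht

/-- Positivity of the momentum function: under the stability condition and with the
smooth coupling constant, the solution `ψ` of the boundary value problem
`ψ(t₋) = ψ(t₊) = 0` is strictly positive on `(t₋, t₊)`. -/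
theorem smooth_momentum_profile_positive
    (x k1 k2 θ N P Q C tm tp : ℝ)
    (hx : x ∈ Set.Ioo (0 : ℝ) 1) (hk1 : k1 < 0) (hk2 : k2 ≠ 0)
    (hθ : θ ∈ Set.Ioo 0 Real.pi)
    (hN : N = Real.sqrt ((1 - k1 ^ 2 + k2 ^ 2) ^ 2 + 4 * k1 ^ 2))
    (hcos : Real.cos θ = (1 - k1 ^ 2 + k2 ^ 2) / N)
    (hsin : Real.sin θ = -(2 * k1) / N)
    (hP : P = 1 + (k1 + k2) ^ 2) (hQ : Q = 1 + (k1 - k2) ^ 2)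
    (hC : C = 4 * k1 * k2 * (P - x ^ 2 * Q) / (x ^ 2 * N ^ 2))
    (htm : tm = (1 - x) / x) (htp : tp = (1 + x) / x)
    (hstab : P > x * Q)
    (sS : ℝ) (hsS : sS ≤ 2)
    (shat rhat alpha : ℝ)
    (hshat : shat = 2 * x * sS + 2) (hrhat : rhat = N)
    (halpha : alpha = N * (-2 + sS * x) / (2 * Q * k2 ^ 2))
    (ψ : ℝ → ℝ → ℝ → ℝ)
    (hψ : ψ = fun d0 d1 t => sS * t ^ 2
      + (alpha * Real.cos θ / (3 * Real.sin θ ^ 2) - (shat - alpha * rhat) / 6) * t ^ 3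
      - (alpha / 3) * Real.sin θ * ((Real.cot θ ^ 2 + 1) * (t ^ 2 + C)) ^ ((3 : ℝ) / 2)
      + d0 + d1 * t)
    (d0 d1 : ℝ)
    (hbc0 : ψ d0 d1 tm = 0) (hbc1 : ψ d0 d1 tp = 0)
    (huniq : ∀ e0 e1 : ℝ, ψ e0 e1 tm = 0 → ψ e0 e1 tp = 0 → e0 = d0 ∧ e1 = d1) :
    ∀ t ∈ Set.Ioo tm tp, 0 < ψ d0 d1 t :=
  smooth_momentum_profile_positive_general x k1 k2 θ N P Q C tm tp hx hk1 hk2 hN hcos hsin hP hQ hC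
    htm htp hstab sS hsS shat rhat alpha hshat hrhat halpha ψ hψ d0 d1 hbc0 hbc1
end
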